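/- arXiv:2402.08560 — 5 statements merged into one kernel-verified Lean document; each statement's English description precedes it below -/
import Mathlib

section
/- There exist constants $t' > 0$ and $\delta > 0$ such that for every integer $N \geq 1$, every real $t$ with $0 < t \leq t'$, and every projection $e \in M_N$ with $\tau_N(1-e) \leq t$, one has $\max_{1 \leq n \leq N} \|\mathbb{E}_n(X_N)\, e\|_\infty \geq \delta N^{1/2}$. -/
open scoped BigOperators

/-- The operator norm of a complex matrix acting on `ℓ₂`. -/
noncomputable def opNorm {N : ℕ} (A : Matrix (Fin N) (Fin N) ℂ) : ℝ :=
  ‖Matrix.toEuclideanCLM (𝕜 := ℂ) A‖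

/-- The all-ones matrix `X_N = ξ_N ξ_N^*`. -/
def XN (N : ℕ) : Matrix (Fin N) (Fin N) ℂ := fun _ _ => 1

/-- The conditional expectation `𝔼_n(X_N)` of the all-ones matrix onto
`M_n ⊕ ℓ_∞^{N-n}` (indices `1,…,n` of the paper correspond to `0,…,n-1` here). -/
def condExpXN (N n : ℕ) : Matrix (Fin N) (Fin N) ℂ := fun i j =>
  if ((i : ℕ) < n ∧ (j : ℕ) < n) ∨ i = j then 1 else 0

open scoped Matrix.Norms.L2Operator

namespace KeyAux

open scoped Matrix

/-- Coercion of a plain function into `EuclideanSpace`. -/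
abbrev toE {N : ℕ} (f : Fin N → ℂ) : EuclideanSpace ℂ (Fin N) := WithLp.toLp 2 f

lemma toE_sub {N : ℕ} (f g : Fin N → ℂ) : toE (f - g) = toE f - toE g := rfl

lemma opNorm_eq_norm {N : ℕ} (A : Matrix (Fin N) (Fin N) ℂ) : opNorm A = ‖A‖ := rfl

/-- The indicator vector of `{0, …, n-1}`. -/
def xiv (N n : ℕ) : Fin N → ℂ := fun i => if (i : ℕ) < n then 1 else 0

lemma sum_indicator {R : Type*} [AddCommMonoidWithOne R] {N n : ℕ} (hn : n ≤ N) :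
    ∑ j : Fin N, (if (j : ℕ) < n then (1 : R) else 0) = n := by
  rw [Fin.sum_univ_eq_sum_range (fun j => if j < n then (1 : R) else 0)]
  rw [← Finset.sum_subset (Finset.range_subset_range.mpr hn)
      (fun x _ hx => if_neg (by simpa using hx))]
  rw [Finset.sum_congr rfl (fun x hx => if_pos (Finset.mem_range.mp hx))]
  simp

lemma sum_indicator_le {N M : ℕ} :
    ∑ j : Fin N, (if (j : ℕ) < M then (1 : ℝ) else 0) ≤ M := by
  rw [Fin.sum_univ_eq_sum_range (fun j => if j < M then (1 : ℝ) else 0)]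
  have h1 : ∑ i ∈ Finset.range N, (if i < M then (1 : ℝ) else 0)
      ≤ ∑ i ∈ Finset.range (N + M), (if i < M then (1 : ℝ) else 0) := by
    apply Finset.sum_le_sum_of_subset_of_nonneg
    · exact Finset.range_subset_range.mpr (Nat.le_add_right _ _)
    · intro i _ _; positivity
  have h2 : ∑ i ∈ Finset.range (N + M), (if i < M then (1 : ℝ) else 0) = M := by
    rw [← Finset.sum_subset (Finset.range_subset_range.mpr (Nat.le_add_left _ _))
        (fun x _ hx => if_neg (by simpa using hx))]
    rw [Finset.sum_congr rfl (fun x hx => if_pos (Finset.mem_range.mp hx))]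
    simp
  linarith

lemma norm_xiv {N n : ℕ} (hn : n ≤ N) : ‖toE (xiv N n)‖ = Real.sqrt n := by
  rw [EuclideanSpace.norm_eq]
  congr 1
  calc ∑ i : Fin N, ‖toE (xiv N n) i‖ ^ 2
      = ∑ i : Fin N, (if (i : ℕ) < n then (1 : ℝ) else 0) := by
        refine Finset.sum_congr rfl fun i _ => ?_
        by_cases h : (i : ℕ) < n <;> simp [toE, xiv, h]
    _ = n := sum_indicator hn

lemma xiv_zero (N : ℕ) : xiv N 0 = 0 := by
  funext i; simp [xiv]

lemma condExp_conjTranspose (N n : ℕ) : (condExpXN N n)ᴴ = condExpXN N n := by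
  ext i j
  simp only [Matrix.conjTranspose_apply, condExpXN]
  by_cases h : ((j : ℕ) < n ∧ (i : ℕ) < n) ∨ j = i
  · rw [if_pos h, if_pos ?_]
    · simp
    · rcases h with ⟨h1, h2⟩ | rfl
      · exact Or.inl ⟨h2, h1⟩
      · exact Or.inr rfl
  · rw [if_neg h, if_neg ?_]
    · simp
    · rintro (⟨h1, h2⟩ | rfl)
      · exact h (Or.inl ⟨h2, h1⟩)
      · exact h (Or.inr rfl)

lemma condExp_mulVec {N n : ℕ} (hn : n ≤ N) :
    condExpXN N n *ᵥ xiv N n = (n : ℂ) • xiv N n := by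
  funext i
  simp only [Matrix.mulVec, dotProduct, condExpXN, xiv, Pi.smul_apply, smul_eq_mul]
  by_cases hi : (i : ℕ) < n
  · have h1 : ∀ j : Fin N,
        (if (((i : ℕ) < n ∧ (j : ℕ) < n) ∨ i = j) then (1 : ℂ) else 0) *
          (if (j : ℕ) < n then 1 else 0) = if (j : ℕ) < n then 1 else 0 := by
      intro j
      by_cases hj : (j : ℕ) < n
      · simp [hi, hj]
      · simp [hj]
    rw [Finset.sum_congr rfl fun j _ => h1 j, sum_indicator hn]
    simp [hi]
  · have h1 : ∀ j : Fin N,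
        (if (((i : ℕ) < n ∧ (j : ℕ) < n) ∨ i = j) then (1 : ℂ) else 0) *
          (if (j : ℕ) < n then 1 else 0) = 0 := by
      intro j
      by_cases hj : (j : ℕ) < n
      · rw [if_pos hj, if_neg, zero_mul]
        rintro (⟨h1, _⟩ | rfl)
        · exact hi h1
        · exact hi hj
      · simp [hj]
    rw [Finset.sum_congr rfl fun j _ => h1 j]
    simp [hi]

/-- Lower bound: `√n ⬝ ‖e ξ_n‖ ≤ ‖𝔼_n(X_N) e‖`. -/
lemma a_bound {N n : ℕ} (hn1 : 1 ≤ n) (hnN : n ≤ N) (e : Matrix (Fin N) (Fin N) ℂ)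
    (he : e.IsHermitian) {C : ℝ} (hC : 0 ≤ C)
    (h : opNorm (condExpXN N n * e) ≤ C) :
    ‖toE (e *ᵥ xiv N n)‖ ^ 2 ≤ C ^ 2 / n := by
  have hn0 : (0 : ℝ) < n := by exact_mod_cast hn1
  have key : ‖toE ((condExpXN N n * e)ᴴ *ᵥ toE (xiv N n))‖
      ≤ ‖condExpXN N n * e‖ * ‖toE (xiv N n)‖ := by
    have := Matrix.l2_opNorm_mulVec ((condExpXN N n * e)ᴴ) (toE (xiv N n))
    rw [Matrix.l2_opNorm_conjTranspose] at this
    exact this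
  have hmul : (condExpXN N n * e)ᴴ *ᵥ toE (xiv N n) = (n : ℂ) • (e *ᵥ xiv N n) := by
    rw [Matrix.conjTranspose_mul, he.eq, condExp_conjTranspose]
    rw [← Matrix.mulVec_mulVec]
    show e *ᵥ condExpXN N n *ᵥ xiv N n = _
    rw [condExp_mulVec hnN, Matrix.mulVec_smul]
  rw [hmul] at key
  have hsmul : ‖toE ((n : ℂ) • (e *ᵥ xiv N n))‖ = (n : ℝ) * ‖toE (e *ᵥ xiv N n)‖ := by
    have : toE ((n : ℂ) • (e *ᵥ xiv N n)) = (n : ℂ) • toE (e *ᵥ xiv N n) := rfl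
    rw [this, norm_smul]
    simp
  rw [hsmul, norm_xiv hnN, ← opNorm_eq_norm] at key
  have key2 : (n : ℝ) * ‖toE (e *ᵥ xiv N n)‖ ≤ C * Real.sqrt n := by
    calc (n : ℝ) * ‖toE (e *ᵥ xiv N n)‖ ≤ opNorm (condExpXN N n * e) * Real.sqrt n := key
      _ ≤ C * Real.sqrt n := by
          apply mul_le_mul_of_nonneg_right h (Real.sqrt_nonneg _)
  have hsq : Real.sqrt n ^ 2 = (n : ℝ) := Real.sq_sqrt hn0.le
  rw [le_div_iff₀ hn0]
  have h3 : ((n : ℝ) * ‖toE (e *ᵥ xiv N n)‖) ^ 2 ≤ (C * Real.sqrt n) ^ 2 := by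
    apply pow_le_pow_left₀ (by positivity) key2
  nlinarith [norm_nonneg (toE (e *ᵥ xiv N n)), hsq, sq_nonneg C]

lemma diag_re {N : ℕ} (e : Matrix (Fin N) (Fin N) ℂ) (he : e.IsHermitian)
    (hee : e * e = e) (k : Fin N) :
    (e k k).re = ∑ j : Fin N, ‖e j k‖ ^ 2 := by
  have hconj : ∀ j, e k j = starRingEnd ℂ (e j k) := by
    intro j
    have := congrFun (congrFun he k) j
    rw [Matrix.conjTranspose_apply] at this
    exact this.symm
  have h1 : e k k = ∑ j : Fin N, ((‖e j k‖ : ℂ) ^ 2) := by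
    conv_lhs => rw [← hee]
    rw [Matrix.mul_apply]
    refine Finset.sum_congr rfl fun j _ => ?_
    rw [hconj j, ← Complex.normSq_eq_conj_mul_self]
    norm_cast
    exact (Complex.sq_norm _).symm
  rw [h1, Complex.re_sum]
  refine Finset.sum_congr rfl fun j _ => ?_
  norm_cast

lemma mulVec_single_eq {N : ℕ} (e : Matrix (Fin N) (Fin N) ℂ) (k : Fin N) :
    e *ᵥ Pi.single k 1 = fun i => e i k := by
  rw [Matrix.mulVec_single]
  simp
  rfl

lemma norm_col_sq {N : ℕ} (e : Matrix (Fin N) (Fin N) ℂ) (k : Fin N) :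
    ‖toE (e *ᵥ Pi.single k 1)‖ ^ 2 = ∑ j : Fin N, ‖e j k‖ ^ 2 := by
  rw [EuclideanSpace.norm_eq, Real.sq_sqrt (by positivity)]
  refine Finset.sum_congr rfl fun j _ => ?_
  simp [mulVec_single_eq, toE]

lemma single_eq_sub {N : ℕ} (k : Fin N) :
    (Pi.single k 1 : Fin N → ℂ) = xiv N ((k : ℕ) + 1) - xiv N (k : ℕ) := by
  funext j
  rw [Pi.sub_apply, Pi.single_apply]
  simp only [xiv]
  by_cases h1 : (j : ℕ) < (k : ℕ)
  · have hne : j ≠ k := by intro h; subst h; exact lt_irrefl _ h1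
    rw [if_neg hne, if_pos (Nat.lt_succ_of_lt h1), if_pos h1]; ring
  · by_cases h2 : j = k
    · subst h2
      rw [if_pos rfl, if_pos (Nat.lt_succ_self _), if_neg h1]; ring
    · have h3 : ¬ (j : ℕ) < (k : ℕ) + 1 := by
        have : (j : ℕ) ≠ (k : ℕ) := fun h => h2 (Fin.ext h)
        omega
      rw [if_neg h2, if_neg h3, if_neg h1]; ring

lemma diag_le_one {N : ℕ} (e : Matrix (Fin N) (Fin N) ℂ) (he : e.IsHermitian)
    (hee : e * e = e) (k : Fin N) : (e k k).re ≤ 1 := by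
  have h0 : (0 : ℝ) ≤ (e k k).re := by
    rw [diag_re e he hee k]; positivity
  have h1 : ‖e k k‖ ^ 2 ≤ (e k k).re := by
    rw [diag_re e he hee k]
    exact Finset.single_le_sum (f := fun j => ‖e j k‖ ^ 2) (fun j _ => sq_nonneg _)
      (Finset.mem_univ k)
  have h2 : ((e k k).re) ^ 2 ≤ ‖e k k‖ ^ 2 := by
    have := pow_le_pow_left₀ (abs_nonneg (e k k).re) (Complex.abs_re_le_norm (e k k)) 2
    rwa [sq_abs] at this
  nlinarith

end KeyAux

open scoped Matrix

/-- Key estimate (3.1): there are `t' > 0` and `δ > 0` such that for every `N ≥ 1`,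
every `0 < t ≤ t'` and every projection `e` with `τ_N(1-e) ≤ t`, one has
`max_{1 ≤ n ≤ N} ‖𝔼_n(X_N) e‖_∞ ≥ δ √N`. -/
theorem key_estimate_condexp :
    ∃ t' δ : ℝ, 0 < t' ∧ 0 < δ ∧
      ∀ N : ℕ, 1 ≤ N → ∀ t : ℝ, 0 < t → t ≤ t' →
        ∀ e : Matrix (Fin N) (Fin N) ℂ, e.IsHermitian → e * e = e →
          (Matrix.trace (1 - e)).re / N ≤ t →
            ∃ n : ℕ, 1 ≤ n ∧ n ≤ N ∧
              δ * Real.sqrt N ≤ opNorm (condExpXN N n * e) := by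
  refine ⟨1/4, 1/10, by norm_num, by norm_num, ?_⟩
  intro N hN t ht htt' e he hee htr
  by_contra hcon
  push_neg at hcon
  have hN0 : (0 : ℝ) < (N : ℝ) := by
    have : 0 < N := hN
    exact_mod_cast this
  set a : ℕ → ℝ := fun n => ‖KeyAux.toE (e *ᵥ KeyAux.xiv N n)‖ with ha_def
  have haux : ∀ n, 1 ≤ n → n ≤ N → a n ^ 2 ≤ ((N : ℝ)/100) / n := by
    intro n h1 h2
    have hC : (0 : ℝ) ≤ 1/10 * Real.sqrt N := by positivity
    have hb := KeyAux.a_bound h1 h2 e he hC (le_of_lt (hcon n h1 h2))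
    calc a n ^ 2 ≤ (1/10 * Real.sqrt N) ^ 2 / n := hb
      _ = ((N : ℝ)/100) / n := by rw [mul_pow, Real.sq_sqrt hN0.le]; ring_nf
  have ha0 : a 0 = 0 := by
    simp [ha_def, KeyAux.xiv_zero, Matrix.mulVec_zero, KeyAux.toE]
  have hk : ∀ k : Fin N,
      (e k k).re ≤ (if ((k : ℕ) + 1 : ℝ) ≤ 3*N/10 then (1 : ℝ) else 1/5) := by
    intro k
    by_cases hcase : ((k : ℕ) + 1 : ℝ) ≤ 3*N/10
    · rw [if_pos hcase]; exact KeyAux.diag_le_one e he hee k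
    · rw [if_neg hcase]
      push_neg at hcase
      have hk1 : (0 : ℝ) < (k : ℕ) + 1 := by positivity
      have hd : (e k k).re = ‖KeyAux.toE (e *ᵥ Pi.single k 1)‖ ^ 2 := by
        rw [KeyAux.norm_col_sq, KeyAux.diag_re e he hee k]
      have hsplit : ‖KeyAux.toE (e *ᵥ Pi.single k 1)‖ ≤ a ((k : ℕ) + 1) + a (k : ℕ) := by
        have hvv : (e *ᵥ (Pi.single k 1 : Fin N → ℂ))
            = e *ᵥ KeyAux.xiv N ((k : ℕ) + 1) - e *ᵥ KeyAux.xiv N (k : ℕ) := by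
          rw [KeyAux.single_eq_sub, Matrix.mulVec_sub]
        rw [hvv, KeyAux.toE_sub]
        exact norm_sub_le _ _
      have hkN : (k : ℕ) + 1 ≤ N := k.isLt
      have hbk1 : a ((k : ℕ) + 1) ^ 2 ≤ ((N : ℝ)/100) / ((k : ℕ) + 1) := by
        have := haux ((k : ℕ) + 1) (Nat.succ_le_succ (Nat.zero_le _)) hkN
        exact_mod_cast this
      have hbk : a (k : ℕ) ^ 2 ≤ 2 * (((N : ℝ)/100) / ((k : ℕ) + 1)) := by
        rcases Nat.eq_zero_or_pos (k : ℕ) with h0 | hpos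
        · rw [h0, ha0]
          norm_num
          positivity
        · have hh := haux (k : ℕ) hpos (le_of_lt k.isLt)
          have hkk : (0 : ℝ) < ((k : ℕ) : ℝ) := by exact_mod_cast hpos
          have hk1' : (1 : ℝ) ≤ ((k : ℕ) : ℝ) := by exact_mod_cast hpos
          calc a (k : ℕ) ^ 2 ≤ ((N : ℝ)/100) / (k : ℕ) := hh
            _ ≤ 2 * (((N : ℝ)/100) / ((k : ℕ) + 1)) := by
                rw [mul_div_assoc', div_le_div_iff₀ hkk hk1]
                nlinarith [hN0]
      have h2 : (e k k).re ≤ (a ((k : ℕ) + 1) + a (k : ℕ)) ^ 2 := by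
        rw [hd]
        exact pow_le_pow_left₀ (norm_nonneg _) hsplit 2
      have h3 : (a ((k : ℕ) + 1) + a (k : ℕ)) ^ 2
          ≤ 2 * (a ((k : ℕ) + 1) ^ 2) + 2 * (a (k : ℕ) ^ 2) := by
        nlinarith [sq_nonneg (a ((k : ℕ) + 1) - a (k : ℕ))]
      have h5 : (6 * (N : ℝ) / 100) / ((k : ℕ) + 1) ≤ 1/5 := by
        rw [div_le_iff₀ hk1]
        nlinarith [hcase]
      have h6 : 2 * (((N : ℝ)/100) / ((k : ℕ) + 1)) + 2 * (2 * (((N : ℝ)/100) / ((k : ℕ) + 1)))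
          = (6 * (N : ℝ) / 100) / ((k : ℕ) + 1) := by ring
      linarith
  have htrace : (3/4 : ℝ) * N ≤ ∑ k : Fin N, (e k k).re := by
    have h1 : Matrix.trace (1 - e) = (N : ℂ) - Matrix.trace e := by
      rw [Matrix.trace_sub, Matrix.trace_one]
      simp
    have h2 : (Matrix.trace (1 - e)).re = (N : ℝ) - ∑ k : Fin N, (e k k).re := by
      rw [h1, Complex.sub_re, Complex.natCast_re]
      congr 1
      simp [Matrix.trace, Matrix.diag, Complex.re_sum]
    rw [h2] at htr
    rw [div_le_iff₀ hN0] at htr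
    nlinarith [htr, hN0]
  have hsum : ∑ k : Fin N, (if ((k : ℕ) + 1 : ℝ) ≤ 3*N/10 then (1 : ℝ) else 1/5)
      ≤ 3*N/10 + N/5 := by
    set M := Nat.floor (3*(N : ℝ)/10) with hM
    have hMle : (M : ℝ) ≤ 3*N/10 := Nat.floor_le (by positivity)
    have hle : ∀ k : Fin N, (if ((k : ℕ) + 1 : ℝ) ≤ 3*N/10 then (1 : ℝ) else 1/5)
        ≤ (if (k : ℕ) < M then (1 : ℝ) else 0) + 1/5 := by
      intro k
      by_cases h : ((k : ℕ) + 1 : ℝ) ≤ 3*N/10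
      · have hfl : (k : ℕ) + 1 ≤ M := Nat.le_floor (by exact_mod_cast h)
        rw [if_pos h, if_pos (by omega)]
        norm_num
      · rw [if_neg h]
        by_cases h2 : (k : ℕ) < M
        · rw [if_pos h2]; norm_num
        · rw [if_neg h2]; norm_num
    calc ∑ k : Fin N, (if ((k : ℕ) + 1 : ℝ) ≤ 3*N/10 then (1 : ℝ) else 1/5)
        ≤ ∑ k : Fin N, ((if (k : ℕ) < M then (1 : ℝ) else 0) + 1/5) :=
          Finset.sum_le_sum fun k _ => hle k
      _ = (∑ k : Fin N, (if (k : ℕ) < M then (1 : ℝ) else 0)) + N * (1/5) := by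
          rw [Finset.sum_add_distrib]
          simp [Finset.card_univ]
      _ ≤ (M : ℝ) + N * (1/5) := by
          linarith [KeyAux.sum_indicator_le (N := N) (M := M)]
      _ ≤ 3*N/10 + N/5 := by linarith
  have hfin := Finset.sum_le_sum (fun k (_ : k ∈ Finset.univ) => hk k)
  have hN1 : (1 : ℝ) ≤ (N : ℝ) := by exact_mod_cast hN
  linarith
end

section
/- There exist constants $t' > 0$ and $\delta > 0$ such that for every integer $N \geq 1$, every real $t$ with $0 < t \leq t'$, and every projection $e \in M_N$ with $\tau_N(1-e) \leq t$, one has $\max_{1 \leq n \leq N} \|Y_n\, e\|_\infty \geq \delta N^{1/2}$, where $Y_n = \sum_{1 \leq k,l \leq n} e_{k,l}$. -/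
open scoped BigOperators

/-- `Y_n = ∑_{1 ≤ k,l ≤ n} e_{k,l}`, the matrix whose upper-left `n × n` corner is
all ones and whose other entries vanish (indices `1,…,n` of the paper correspond
to `0,…,n-1` here). -/
def Ymat (N n : ℕ) : Matrix (Fin N) (Fin N) ℂ := fun i j =>
  if (i : ℕ) < n ∧ (j : ℕ) < n then 1 else 0

open Matrix Finset

def eta (N n : ℕ) : Fin N → ℂ := fun i => if (i : ℕ) < n then 1 else 0
noncomputable def vv {N : ℕ} (e : Matrix (Fin N) (Fin N) ℂ) (n : ℕ) : Fin N → ℂ :=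
  e.mulVec (eta N n)
noncomputable def cc {N : ℕ} (e : Matrix (Fin N) (Fin N) ℂ) (n : ℕ) : ℝ :=
  ∑ i, ‖vv e n i‖ ^ 2
lemma star_eta (N n : ℕ) : star (eta N n) = eta N n := by
  funext i; simp only [Pi.star_apply, eta]; split <;> simp
lemma cc_nonneg {N : ℕ} (e : Matrix (Fin N) (Fin N) ℂ) (n : ℕ) : 0 ≤ cc e n := by
  apply Finset.sum_nonneg; intro i _; positivity
lemma norm_mulVec_le {N : ℕ} (A : Matrix (Fin N) (Fin N) ℂ) (x : Fin N → ℂ) :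
    ‖(WithLp.equiv 2 (Fin N → ℂ)).symm (A.mulVec x)‖ ≤
      opNorm A * ‖(WithLp.equiv 2 (Fin N → ℂ)).symm x‖ := by
  have h := (Matrix.toEuclideanCLM (𝕜 := ℂ) A).le_opNorm ((WithLp.equiv 2 (Fin N → ℂ)).symm x)
  exact h
lemma euclid_norm {N : ℕ} (x : Fin N → ℂ) :
    ‖(WithLp.equiv 2 (Fin N → ℂ)).symm x‖ = Real.sqrt (∑ i, ‖x i‖ ^ 2) := by
  rw [EuclideanSpace.norm_eq]
  simp [WithLp.equiv_symm_apply]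
lemma card_filter_lt (N n : ℕ) (h : n ≤ N) :
    ((Finset.univ : Finset (Fin N)).filter (fun i : Fin N => (i : ℕ) < n)).card = n := by
  have heq : ((Finset.univ : Finset (Fin N)).filter (fun i : Fin N => (i : ℕ) < n))
      = (Finset.range n).attachFin
        (fun m hm => lt_of_lt_of_le (Finset.mem_range.mp hm) h) := by
    ext i
    simp [Finset.mem_attachFin]
  rw [heq, Finset.card_attachFin, Finset.card_range]

section
variable {N : ℕ} {e : Matrix (Fin N) (Fin N) ℂ}
  (hherm : e.IsHermitian) (hproj : e * e = e)
include hherm hproj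

lemma dot_eq (n : ℕ) : star (eta N n) ⬝ᵥ vv e n = (cc e n : ℂ) := by
  have he : eᴴ = e := hherm
  have h1 : star (vv e n) ⬝ᵥ vv e n = star (eta N n) ⬝ᵥ vv e n := by
    simp only [vv, star_mulVec, dotProduct_mulVec, vecMul_vecMul, he, hproj]
  rw [← h1]
  simp only [dotProduct, Pi.star_apply, RCLike.star_def, Complex.conj_mul', cc]
  norm_cast

lemma sum_eta_vv (n : ℕ) : ∑ j, eta N n j * vv e n j = (cc e n : ℂ) := by
  rw [← dot_eq hherm hproj n, dotProduct, star_eta]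

lemma Ymat_mulVec (n : ℕ) :
    (Ymat N n * e).mulVec (vv e n) = fun i => (cc e n : ℂ) * eta N n i := by
  have h1 : (Ymat N n * e).mulVec (vv e n) = (Ymat N n).mulVec (vv e n) := by
    calc (Ymat N n * e).mulVec (vv e n) = (Ymat N n * e * e).mulVec (eta N n) := by
          rw [vv, mulVec_mulVec]
      _ = (Ymat N n * e).mulVec (eta N n) := by rw [mul_assoc, hproj]
      _ = (Ymat N n).mulVec (vv e n) := by rw [vv, ← mulVec_mulVec]
  rw [h1]
  funext i
  show ∑ j, Ymat N n i j * vv e n j = _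
  by_cases hi : (i : ℕ) < n
  · have : ∀ j : Fin N, Ymat N n i j * vv e n j = eta N n j * vv e n j := by
      intro j
      simp [Ymat, eta, hi]
    rw [Finset.sum_congr rfl (fun j _ => this j), sum_eta_vv hherm hproj n]
    simp [eta, hi]
  · simp [Ymat, eta, hi]

lemma norm_vv (n : ℕ) :
    ‖(WithLp.equiv 2 (Fin N → ℂ)).symm (vv e n)‖ = Real.sqrt (cc e n) := by
  rw [euclid_norm, cc]

lemma claimA (n : ℕ) (hn : n ≤ N) :
    Real.sqrt (cc e n * n) ≤ opNorm (Ymat N n * e) := by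
  rcases eq_or_lt_of_le (cc_nonneg e n) with h0 | hpos
  · rw [← h0, zero_mul, Real.sqrt_zero]
    exact norm_nonneg _
  · have h := norm_mulVec_le (Ymat N n * e) (vv e n)
    rw [norm_vv hherm hproj, Ymat_mulVec hherm hproj, euclid_norm] at h
    have hsumnorm : ∑ i, ‖(cc e n : ℂ) * eta N n i‖ ^ 2 = (n : ℝ) * cc e n ^ 2 := by
      have hterm : ∀ i : Fin N, ‖(cc e n : ℂ) * eta N n i‖ ^ 2
          = if (i : ℕ) < n then cc e n ^ 2 else 0 := by
        intro i
        by_cases hi : (i : ℕ) < n <;>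
          simp [eta, hi, Complex.norm_real, sq_abs]
      rw [Finset.sum_congr rfl (fun i _ => hterm i), ← Finset.sum_filter,
        Finset.sum_const, card_filter_lt N n hn, nsmul_eq_mul]
    rw [hsumnorm] at h
    have hsq : Real.sqrt ((n : ℝ) * cc e n ^ 2) = cc e n * Real.sqrt n := by
      rw [Real.sqrt_mul (by positivity), Real.sqrt_sq hpos.le, mul_comm]
    rw [hsq] at h
    -- h : cc e n * √n ≤ opNorm (Ymat N n * e) * √(cc e n)
    have hsc : 0 < Real.sqrt (cc e n) := Real.sqrt_pos.mpr hpos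
    rw [Real.sqrt_mul hpos.le]
    have key : Real.sqrt (cc e n) * Real.sqrt n * Real.sqrt (cc e n)
        ≤ opNorm (Ymat N n * e) * Real.sqrt (cc e n) := by
      calc Real.sqrt (cc e n) * Real.sqrt n * Real.sqrt (cc e n)
          = (Real.sqrt (cc e n) * Real.sqrt (cc e n)) * Real.sqrt n := by ring
        _ = cc e n * Real.sqrt n := by rw [Real.mul_self_sqrt hpos.le]
        _ ≤ _ := h
    exact le_of_mul_le_mul_right key hsc

end

section
variable {N : ℕ} {e : Matrix (Fin N) (Fin N) ℂ}
  (hherm : e.IsHermitian) (hproj : e * e = e)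
include hherm hproj

lemma diag_eq (j : Fin N) : e j j = ((∑ i, ‖e i j‖ ^ 2 : ℝ) : ℂ) := by
  have he : eᴴ = e := hherm
  conv_lhs => rw [← hproj]
  rw [Matrix.mul_apply]
  have hterm : ∀ k : Fin N, e j k * e k j = ((‖e k j‖ ^ 2 : ℝ) : ℂ) := by
    intro k
    have h1 : e j k = star (e k j) := by
      conv_lhs => rw [← he]
      rfl
    rw [h1, RCLike.star_def, Complex.conj_mul']
    norm_cast
  rw [Finset.sum_congr rfl (fun k _ => hterm k)]
  norm_cast

lemma trace_re : (Matrix.trace e).re = ∑ j, (∑ i, ‖e i j‖ ^ 2 : ℝ) := by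
  rw [Matrix.trace, Complex.re_sum]
  apply Finset.sum_congr rfl
  intro j _
  rw [Matrix.diag_apply, diag_eq hherm hproj j, Complex.ofReal_re]

lemma diag_le_one (j : Fin N) : (∑ i, ‖e i j‖ ^ 2 : ℝ) ≤ 1 := by
  set T := (∑ i, ‖e i j‖ ^ 2 : ℝ) with hT
  have h0 : 0 ≤ T := by apply Finset.sum_nonneg; intro i _; positivity
  have h1 : ‖e j j‖ ^ 2 ≤ T := by
    apply Finset.single_le_sum (f := fun i => ‖e i j‖ ^ 2) (fun i _ => by positivity)
      (Finset.mem_univ j)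
  have h2 : ‖e j j‖ ^ 2 = T ^ 2 := by
    rw [diag_eq hherm hproj j, ← hT, Complex.norm_real, Real.norm_eq_abs, sq_abs]
  nlinarith

lemma col_eq (j : Fin N) : (fun i => e i j) = vv e ((j : ℕ) + 1) - vv e (j : ℕ) := by
  funext i
  simp only [vv, Pi.sub_apply, Matrix.mulVec, dotProduct, eta]
  rw [← Finset.sum_sub_distrib]
  have hterm : ∀ k : Fin N,
      e i k * (if (k : ℕ) < (j : ℕ) + 1 then (1 : ℂ) else 0)
        - e i k * (if (k : ℕ) < (j : ℕ) then (1 : ℂ) else 0)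
      = if k = j then e i j else 0 := by
    intro k
    by_cases hkj : k = j
    · subst hkj
      simp
    · have hne : (k : ℕ) ≠ (j : ℕ) := fun h => hkj (Fin.ext h)
      by_cases h2 : (k : ℕ) < (j : ℕ)
      · have h3 : (k : ℕ) < (j : ℕ) + 1 := by omega
        simp [h2, h3, hkj]
      · have h3 : ¬ ((k : ℕ) < (j : ℕ) + 1) := by omega
        simp [h2, h3, hkj]
  rw [Finset.sum_congr rfl (fun k _ => hterm k), Finset.sum_ite_eq' Finset.univ j,
    if_pos (Finset.mem_univ j)]

lemma col_bound (j : Fin N) :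
    (∑ i, ‖e i j‖ ^ 2 : ℝ)
      ≤ (Real.sqrt (cc e ((j : ℕ) + 1)) + Real.sqrt (cc e (j : ℕ))) ^ 2 := by
  have h0 : 0 ≤ (∑ i, ‖e i j‖ ^ 2 : ℝ) := by apply Finset.sum_nonneg; intro i _; positivity
  have h1 : Real.sqrt (∑ i, ‖e i j‖ ^ 2 : ℝ)
      ≤ Real.sqrt (cc e ((j : ℕ) + 1)) + Real.sqrt (cc e (j : ℕ)) := by
    rw [← euclid_norm]
    rw [col_eq hherm hproj j]
    have hsub : (WithLp.equiv 2 (Fin N → ℂ)).symm (vv e ((j : ℕ) + 1) - vv e (j : ℕ))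
        = (WithLp.equiv 2 (Fin N → ℂ)).symm (vv e ((j : ℕ) + 1))
          - (WithLp.equiv 2 (Fin N → ℂ)).symm (vv e (j : ℕ)) := rfl
    rw [hsub]
    refine (norm_sub_le _ _).trans ?_
    rw [norm_vv hherm hproj, norm_vv hherm hproj]
  calc (∑ i, ‖e i j‖ ^ 2 : ℝ) = Real.sqrt (∑ i, ‖e i j‖ ^ 2 : ℝ) ^ 2 := by
        rw [Real.sq_sqrt h0]
    _ ≤ _ := by
        apply pow_le_pow_left₀ (Real.sqrt_nonneg _) h1

end
/-- There are `t' > 0` and `δ > 0` such that for every `N ≥ 1`, every `0 < t ≤ t'`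
and every projection `e` with `τ_N(1-e) ≤ t`, one has
`max_{1 ≤ n ≤ N} ‖Y_n e‖_∞ ≥ δ √N`. -/
theorem key_estimate_corner :
    ∃ t' δ : ℝ, 0 < t' ∧ 0 < δ ∧
      ∀ N : ℕ, 1 ≤ N → ∀ t : ℝ, 0 < t → t ≤ t' →
        ∀ e : Matrix (Fin N) (Fin N) ℂ, e.IsHermitian → e * e = e →
          (Matrix.trace (1 - e)).re / N ≤ t →
            ∃ n : ℕ, 1 ≤ n ∧ n ≤ N ∧
              δ * Real.sqrt N ≤ opNorm (Ymat N n * e) := by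
  refine ⟨1/8, 1/16, by norm_num, by norm_num, ?_⟩
  intro N hN t ht htt' e hherm hproj htr
  by_contra hcon
  push_neg at hcon
  have hNpos : (0:ℝ) < N := by
    have : 0 < N := by omega
    exact_mod_cast this
  -- trace lower bound
  have htrace : (7/8 : ℝ) * N ≤ (Matrix.trace e).re := by
    have h1 : (Matrix.trace (1 - e)).re = (N : ℝ) - (Matrix.trace e).re := by
      rw [Matrix.trace_sub, Matrix.trace_one, Complex.sub_re]
      simp
    rw [h1, div_le_iff₀ hNpos] at htr
    nlinarith
  have hcn : ∀ n : ℕ, 1 ≤ n → n ≤ N → cc e n * n < (1/16:ℝ)^2 * N := by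
    intro n h1 h2
    have hx := lt_of_le_of_lt (claimA hherm hproj n h2) (hcon n h1 h2)
    have hnn : (0:ℝ) ≤ cc e n * n := mul_nonneg (cc_nonneg e n) (by positivity)
    calc cc e n * n = Real.sqrt (cc e n * n) ^ 2 := (Real.sq_sqrt hnn).symm
      _ < (1/16 * Real.sqrt N) ^ 2 := by
          apply pow_lt_pow_left₀ hx (Real.sqrt_nonneg _) (by norm_num)
      _ = (1/16:ℝ)^2 * N := by
          rw [mul_pow, Real.sq_sqrt hNpos.le]
  rcases eq_or_lt_of_le hN with hN1 | hN2
  · -- N = 1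
    subst hN1
    have h1 := hcn 1 le_rfl le_rfl
    have hv1 : vv e 1 = fun i => e i 0 := by
      funext i
      simp [vv, Matrix.mulVec, dotProduct, eta]
    have hc1 : cc e 1 = ‖e 0 0‖^2 := by
      rw [cc, hv1]
      simp
    have htr1 : (Matrix.trace e).re = (e 0 0).re := by
      simp [Matrix.trace]
    have hd : (e 0 0).re = ‖e 0 0‖^2 := by
      conv_lhs => rw [diag_eq hherm hproj 0, Complex.ofReal_re]
      simp [Fin.sum_univ_one]
    rw [htr1, hd] at htrace
    rw [hc1] at h1
    push_cast at h1 htrace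
    nlinarith
  · -- 2 ≤ N
    have hN2' : (2:ℝ) ≤ N := by exact_mod_cast hN2
    have hbig : ∀ j : Fin N, N ≤ 2*(j:ℕ) → (∑ i, ‖e i j‖^2 : ℝ) ≤ 8 * (1/16:ℝ)^2 := by
      intro j hj
      have hj1 : 1 ≤ (j:ℕ) := by omega
      have hjN : (j:ℕ) ≤ N := le_of_lt j.isLt
      have hj2 : (j:ℕ)+1 ≤ N := j.isLt
      have hcj := hcn (j:ℕ) hj1 hjN
      have hcj1 := hcn ((j:ℕ)+1) (by omega) hj2
      have hNle : (N:ℝ) ≤ 2*((j:ℕ):ℝ) := by exact_mod_cast hj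
      have hbj : cc e (j:ℕ) < 2*(1/16:ℝ)^2 := by
        nlinarith [cc_nonneg e (j:ℕ)]
      have hbj1 : cc e ((j:ℕ)+1) < 2*(1/16:ℝ)^2 := by
        have hpc : ((((j:ℕ)+1 : ℕ)) : ℝ) = ((j:ℕ):ℝ) + 1 := by push_cast; ring
        rw [hpc] at hcj1
        nlinarith [cc_nonneg e ((j:ℕ)+1)]
      refine (col_bound hherm hproj j).trans ?_
      have ha := Real.sq_sqrt (cc_nonneg e ((j:ℕ)+1))
      have hb := Real.sq_sqrt (cc_nonneg e (j:ℕ))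
      nlinarith [Real.sqrt_nonneg (cc e ((j:ℕ)+1)), Real.sqrt_nonneg (cc e (j:ℕ)),
        sq_nonneg (Real.sqrt (cc e ((j:ℕ)+1)) - Real.sqrt (cc e (j:ℕ)))]
    have hsum1 : ∑ j : Fin N, (∑ i, ‖e i j‖^2 : ℝ)
        ≤ ∑ j : Fin N, (if 2*(j:ℕ) < N then (1:ℝ) else 8*(1/16:ℝ)^2) := by
      apply Finset.sum_le_sum
      intro j _
      by_cases h : 2*(j:ℕ) < N
      · rw [if_pos h]
        exact diag_le_one hherm hproj j
      · rw [if_neg h]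
        exact hbig j (le_of_not_gt h)
    have hcard : (((Finset.univ : Finset (Fin N)).filter
        (fun j : Fin N => 2*(j:ℕ) < N)).card : ℝ) ≤ 3/4 * N := by
      have heq : ((Finset.univ : Finset (Fin N)).filter (fun j : Fin N => 2*(j:ℕ) < N))
          = (Finset.univ : Finset (Fin N)).filter (fun j : Fin N => (j:ℕ) < (N+1)/2) := by
        ext j
        simp only [Finset.mem_filter, Finset.mem_univ, true_and]
        omega
      rw [heq, card_filter_lt N ((N+1)/2) (by omega)]
      have h4 : 4 * ((N+1)/2) ≤ 3*N := by omega
      have h4' : (4:ℝ) * (((N+1)/2 : ℕ) : ℝ) ≤ 3*(N:ℝ) := by exact_mod_cast h4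
      linarith
    have hcard2 : (((Finset.univ : Finset (Fin N)).filter
        (fun j : Fin N => ¬ (2*(j:ℕ) < N))).card : ℝ) ≤ N := by
      have h := Finset.card_filter_le (Finset.univ : Finset (Fin N))
        (fun j : Fin N => ¬ (2*(j:ℕ) < N))
      have h2 : ((Finset.univ : Finset (Fin N)).card) = N := by simp
      have := h.trans (le_of_eq h2)
      exact_mod_cast this
    have hsum2 : ∑ j : Fin N, (if 2*(j:ℕ) < N then (1:ℝ) else 8*(1/16:ℝ)^2)
        ≤ 3/4 * N + 8*(1/16:ℝ)^2 * N := by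
      rw [Finset.sum_ite, Finset.sum_const, Finset.sum_const, nsmul_eq_mul, nsmul_eq_mul]
      nlinarith [hcard, hcard2]
    rw [trace_re hherm hproj] at htrace
    linarith
end

section
/- Let $0 < p < 1$ and $n \geq 1$, and let $T_n = \sum_{1 \leq i \leq j \leq n} e_{i,j} \in M_n$ be the upper-triangular all-ones matrix. Then $\|T_n\|_{L_p(M_n, \mathrm{tr}_n)} \geq (n/2)^{1/p}$, i.e. $\sum_{i=1}^n s_i(T_n)^p \geq n/2$. -/
open scoped BigOperators
open Matrix

/-- The singular values of a square complex matrix: the square roots of the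
eigenvalues of `Aᴴ * A`. -/
noncomputable def singVal {n : Type*} [Fintype n] [DecidableEq n]
    (A : Matrix n n ℂ) (i : n) : ℝ :=
  Real.sqrt ((Matrix.isHermitian_conjTranspose_mul_self A).eigenvalues i)

/-- `T_n = ∑_{1 ≤ i ≤ j ≤ n} e_{i,j}`, the upper-triangular all-ones matrix. -/
def Tmat (n : ℕ) : Matrix (Fin n) (Fin n) ℂ := fun i j => if i ≤ j then 1 else 0

lemma Tmat_mulVec (n : ℕ) (x : Fin n → ℂ) (i : Fin n) :
    (Tmat n *ᵥ x) i = ∑ j, if i ≤ j then x j else 0 := by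
  simp [Tmat, Matrix.mulVec, dotProduct, ite_mul]

lemma star_dot {k : ℕ} (w : Fin k → ℂ) : star w ⬝ᵥ w = ((∑ j, ‖w j‖^2 : ℝ) : ℂ) := by
  simp only [dotProduct, Pi.star_apply, Complex.star_def, Complex.ofReal_sum]
  refine Finset.sum_congr rfl fun j _ => ?_
  rw [mul_comm]
  erw [Complex.mul_conj']
  push_cast
  ring

lemma key (n : ℕ) (x : Fin n → ℂ) :
    ∑ i, ‖x i‖^2 ≤ 4 * ∑ i, ‖(Tmat n *ᵥ x) i‖^2 := by
  set u := Tmat n *ᵥ x with hu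
  set g : Fin n → ℂ := fun i => if h : (i:ℕ)+1 < n then u ⟨(i:ℕ)+1, h⟩ else 0 with hg
  have hx : ∀ i, x i = u i - g i := by
    intro i
    by_cases h : (i:ℕ)+1 < n
    · have : u i - u ⟨(i:ℕ)+1, h⟩ = x i := by
        simp only [hu, Tmat_mulVec]
        rw [← Finset.sum_sub_distrib]
        have hterm : ∀ j, (if i ≤ j then x j else 0)
            - (if (⟨(i:ℕ)+1, h⟩ : Fin n) ≤ j then x j else 0)
            = if j = i then x j else 0 := by
          intro j
          have e1 : ((⟨(i:ℕ)+1, h⟩ : Fin n) ≤ j) ↔ (i:ℕ)+1 ≤ (j:ℕ) := Iff.rfl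
          have e2 : (i ≤ j) ↔ (i:ℕ) ≤ (j:ℕ) := Iff.rfl
          have e3 : (j = i) ↔ (j:ℕ) = (i:ℕ) := Fin.ext_iff
          simp only [e1, e2, e3]
          split_ifs <;> first | (exfalso; omega) | simp
        rw [Finset.sum_congr rfl (fun j _ => hterm j), Finset.sum_ite_eq' Finset.univ i x]
        simp
      simp [hg, h, ← this]
    · have huix : u i = x i := by
        simp only [hu, Tmat_mulVec]
        have hterm : ∀ j, (if i ≤ j then x j else 0) = if j = i then x j else 0 := by
          intro j
          have hj := j.isLt
          have e2 : (i ≤ j) ↔ (i:ℕ) ≤ (j:ℕ) := Iff.rfl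
          have e3 : (j = i) ↔ (j:ℕ) = (i:ℕ) := Fin.ext_iff
          simp only [e2, e3]
          split_ifs <;> first | (exfalso; omega) | simp
        rw [Finset.sum_congr rfl (fun j _ => hterm j), Finset.sum_ite_eq' Finset.univ i x]
        simp
      simp [hg, h, huix]
  have hstep : ∀ i, ‖x i‖^2 ≤ 2 * ‖u i‖^2 + 2 * ‖g i‖^2 := by
    intro i
    rw [hx i]
    have h1 : ‖u i - g i‖ ≤ ‖u i‖ + ‖g i‖ := norm_sub_le _ _
    have h2 : ‖u i - g i‖^2 ≤ (‖u i‖ + ‖g i‖)^2 := by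
      apply sq_le_sq' <;> nlinarith [norm_nonneg (u i - g i), norm_nonneg (u i), norm_nonneg (g i)]
    nlinarith [sq_nonneg (‖u i‖ - ‖g i‖)]
  have hgsum : ∑ i, ‖g i‖^2 ≤ ∑ i, ‖u i‖^2 := by
    cases n with
    | zero => simp
    | succ m =>
      have hlast : g (Fin.last m) = 0 := by simp [hg]
      have h1 : ∑ i : Fin (m+1), ‖g i‖^2 = ∑ i : Fin m, ‖u i.succ‖^2 := by
        rw [Fin.sum_univ_castSucc, hlast]
        norm_num
        refine Finset.sum_congr rfl fun i _ => ?_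
        have h : ((Fin.castSucc i : Fin (m+1)) : ℕ) + 1 < m + 1 := by
          simp only [Fin.coe_castSucc]; omega
        simp only [hg]
        rw [dif_pos h]
        congr 1
      rw [h1, Fin.sum_univ_succ]
      nlinarith [sq_nonneg ‖u 0‖]
  calc ∑ i, ‖x i‖^2 ≤ ∑ i, (2 * ‖u i‖^2 + 2 * ‖g i‖^2) := Finset.sum_le_sum fun i _ => hstep i
    _ = 2 * ∑ i, ‖u i‖^2 + 2 * ∑ i, ‖g i‖^2 := by
        rw [Finset.sum_add_distrib, Finset.mul_sum, Finset.mul_sum]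
    _ ≤ 4 * ∑ i, ‖u i‖^2 := by nlinarith [hgsum]

/-- Lower bound in Lemma 5.1: for `0 < p < 1`,
`‖T_n‖_{L_p(M_n, tr_n)}^p = ∑ᵢ sᵢ(T_n)^p ≥ n / 2`. -/
theorem triangular_schatten_lower (p : ℝ) (hp0 : 0 < p) (hp1 : p < 1)
    (n : ℕ) (hn : 1 ≤ n) :
    (n : ℝ) / 2 ≤ ∑ i, singVal (Tmat n) i ^ p := by
  have hA := Matrix.isHermitian_conjTranspose_mul_self (Tmat n)
  have heig : ∀ i : Fin n, (1:ℝ)/4 ≤ hA.eigenvalues i := by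
    intro i
    set v : EuclideanSpace ℂ (Fin n) := hA.eigenvectorBasis i with hv
    have hnorm : ‖v‖ = 1 := hA.eigenvectorBasis.orthonormal.1 i
    have hvsum : ∑ j, ‖v j‖^2 = 1 := by
      have h0 := EuclideanSpace.norm_eq v
      rw [hnorm] at h0
      have h2 : Real.sqrt (∑ j, ‖v j‖^2) = 1 := h0.symm
      nlinarith [Real.sq_sqrt (Finset.sum_nonneg fun j (_ : j ∈ Finset.univ) => sq_nonneg ‖v j‖),
        h2]
    have hmul : ((Tmat n)ᴴ * Tmat n) *ᵥ ⇑v = hA.eigenvalues i • ⇑v :=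
      hA.mulVec_eigenvectorBasis i
    set w : Fin n → ℂ := ⇑v with hw
    set u := Tmat n *ᵥ w with hu
    have hdot : star w ⬝ᵥ (((Tmat n)ᴴ * Tmat n) *ᵥ w) = star u ⬝ᵥ u := by
      rw [hu, ← Matrix.mulVec_mulVec, Matrix.dotProduct_mulVec, ← Matrix.star_mulVec]
    have hdot2 : star w ⬝ᵥ (((Tmat n)ᴴ * Tmat n) *ᵥ w) = (hA.eigenvalues i : ℂ) := by
      rw [show ((Tmat n)ᴴ * Tmat n) *ᵥ w = hA.eigenvalues i • w from hmul]
      rw [dotProduct_smul]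
      have hvv : star w ⬝ᵥ w = (1:ℂ) := by
        rw [star_dot]
        have : ∑ j, ‖w j‖^2 = 1 := hvsum
        rw [this]
        norm_num
      rw [hvv]
      simp [Complex.real_smul]
    have huu : star u ⬝ᵥ u = ((∑ j, ‖u j‖^2 : ℝ) : ℂ) := star_dot u
    have heq : hA.eigenvalues i = ∑ j, ‖u j‖^2 := by
      have := hdot2.symm.trans (hdot.trans huu)
      exact_mod_cast this
    have hkey : ∑ j, ‖w j‖^2 ≤ 4 * ∑ j, ‖u j‖^2 := by
      have := key n w
      rwa [← hu] at this
    have hwsum : ∑ j, ‖w j‖^2 = 1 := hvsum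
    rw [heq]
    linarith [hkey, hwsum.symm.le]
  have hsing : ∀ i : Fin n, (1:ℝ)/2 ≤ singVal (Tmat n) i := by
    intro i
    have h4 : ((1:ℝ)/2) = Real.sqrt (1/4) := by
      rw [show (1:ℝ)/4 = (1/2)^2 by norm_num, Real.sqrt_sq (by norm_num)]
    rw [singVal, h4]
    exact Real.sqrt_le_sqrt (heig i)
  have hpow : ∀ i : Fin n, (1:ℝ)/2 ≤ singVal (Tmat n) i ^ p := by
    intro i
    have h1 : ((1:ℝ)/2) ^ p ≤ singVal (Tmat n) i ^ p :=
      Real.rpow_le_rpow (by norm_num) (hsing i) hp0.le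
    have h2 : ((1:ℝ)/2) ≤ ((1:ℝ)/2) ^ p := by
      nth_rewrite 1 [show ((1:ℝ)/2) = ((1:ℝ)/2) ^ (1:ℝ) by rw [Real.rpow_one]]
      exact Real.rpow_le_rpow_of_exponent_ge (by norm_num) (by norm_num) hp1.le
    linarith
  calc (n : ℝ)/2 = (Finset.univ : Finset (Fin n)).card • ((1:ℝ)/2) := by
        simp [nsmul_eq_mul]; ring
    _ ≤ ∑ i, singVal (Tmat n) i ^ p := Finset.card_nsmul_le_sum _ _ _ fun i _ => hpow i
end

section
/- Let $0 < p < 1$ and $n \geq 1$, and let $T_n = \sum_{1 \leq i \leq j \leq n} e_{i,j} \in M_n$ be the upper-triangular all-ones matrix. Then $\|T_n\|_{L_p(M_n, \mathrm{tr}_n)} \leq \left(\frac{2n}{1-2^{p-1}}\right)^{1/p}$, i.e. $\sum_{i=1}^n s_i(T_n)^p \leq \frac{2n}{1-2^{p-1}}$. -/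
open scoped BigOperators

namespace TriAux

open Real Matrix

def Nmat (n : ℕ) : Matrix (Fin n) (Fin n) ℂ :=
  fun i j => if (j : ℕ) = (i : ℕ) + 1 then 1 else 0

def Bmat (n : ℕ) : Matrix (Fin n) (Fin n) ℂ := 1 - Nmat n

lemma mul_Nmat_succ {n : ℕ} (A : Matrix (Fin n) (Fin n) ℂ) {i j m : Fin n}
    (hm : (j : ℕ) = (m : ℕ) + 1) : (A * Nmat n) i j = A i m := by
  rw [Matrix.mul_apply]
  rw [Finset.sum_eq_single m]
  · simp only [Nmat, if_pos hm, mul_one]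
  · intro b _ hb
    simp only [Nmat]
    rw [if_neg, mul_zero]
    intro hc; exact hb (Fin.ext (by omega))
  · intro h'; exact absurd (Finset.mem_univ _) h'

lemma mul_Nmat_zero {n : ℕ} (A : Matrix (Fin n) (Fin n) ℂ) {i j : Fin n}
    (hj : (j : ℕ) = 0) : (A * Nmat n) i j = 0 := by
  rw [Matrix.mul_apply]
  apply Finset.sum_eq_zero
  intro b _
  simp only [Nmat]
  rw [if_neg (by omega), mul_zero]

lemma Nmat_mul_succ {n : ℕ} (A : Matrix (Fin n) (Fin n) ℂ) {i j m : Fin n}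
    (hm : (m : ℕ) = (i : ℕ) + 1) : (Nmat n * A) i j = A m j := by
  rw [Matrix.mul_apply]
  rw [Finset.sum_eq_single m]
  · simp only [Nmat]
    rw [if_pos hm, one_mul]
  · intro b _ hb
    simp only [Nmat]
    rw [if_neg, zero_mul]
    intro hc; exact hb (Fin.ext (by omega))
  · intro h'; exact absurd (Finset.mem_univ _) h'

lemma Nmat_mul_last {n : ℕ} (A : Matrix (Fin n) (Fin n) ℂ) {i j : Fin n}
    (hi : (i : ℕ) + 1 = n) : (Nmat n * A) i j = 0 := by
  rw [Matrix.mul_apply]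
  apply Finset.sum_eq_zero
  intro b _
  simp only [Nmat]
  rw [if_neg (by omega), zero_mul]

lemma Nmat_mulVec_succ {n : ℕ} (v : Fin n → ℂ) {i m : Fin n}
    (hm : (m : ℕ) = (i : ℕ) + 1) : (Nmat n *ᵥ v) i = v m := by
  rw [Matrix.mulVec, dotProduct]
  rw [Finset.sum_eq_single m]
  · simp only [Nmat]
    rw [if_pos hm, one_mul]
  · intro b _ hb
    simp only [Nmat]
    rw [if_neg, zero_mul]
    intro hc; exact hb (Fin.ext (by omega))
  · intro h'; exact absurd (Finset.mem_univ _) h'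

lemma Nmat_mulVec_last {n : ℕ} (v : Fin n → ℂ) {i : Fin n}
    (hi : (i : ℕ) + 1 = n) : (Nmat n *ᵥ v) i = 0 := by
  rw [Matrix.mulVec, dotProduct]
  apply Finset.sum_eq_zero
  intro b _
  simp only [Nmat]
  rw [if_neg (by omega), zero_mul]

lemma NmatH_mulVec_succ {n : ℕ} (v : Fin n → ℂ) {i m : Fin n}
    (hm : (i : ℕ) = (m : ℕ) + 1) : ((Nmat n)ᴴ *ᵥ v) i = v m := by
  rw [Matrix.mulVec, dotProduct]
  rw [Finset.sum_eq_single m]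
  · simp only [Matrix.conjTranspose_apply, Nmat]
    rw [if_pos hm]
    simp
  · intro b _ hb
    simp only [Matrix.conjTranspose_apply, Nmat]
    rw [if_neg, star_zero, zero_mul]
    intro hc; exact hb (Fin.ext (by omega))
  · intro h'; exact absurd (Finset.mem_univ _) h'

lemma NmatH_mulVec_zero {n : ℕ} (v : Fin n → ℂ) {i : Fin n}
    (hi : (i : ℕ) = 0) : ((Nmat n)ᴴ *ᵥ v) i = 0 := by
  rw [Matrix.mulVec, dotProduct]
  apply Finset.sum_eq_zero
  intro b _
  simp only [Matrix.conjTranspose_apply, Nmat]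
  rw [if_neg (by omega), star_zero, zero_mul]

lemma Tmat_mul_Bmat (n : ℕ) : Tmat n * Bmat n = 1 := by
  ext i j
  rw [Bmat, Matrix.mul_sub, Matrix.mul_one, Matrix.sub_apply]
  rcases Nat.eq_zero_or_pos (j : ℕ) with hj | hj
  · rw [mul_Nmat_zero _ hj, sub_zero]
    simp only [Tmat, Matrix.one_apply, Fin.le_def, Fin.ext_iff]
    split_ifs <;> first | (exfalso; omega) | rfl
  · obtain ⟨m, hm⟩ : ∃ m : Fin n, (j : ℕ) = (m : ℕ) + 1 :=
      ⟨⟨(j : ℕ) - 1, by omega⟩, by simp only [Fin.val_mk]; omega⟩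
    rw [mul_Nmat_succ _ hm]
    simp only [Tmat, Matrix.one_apply, Fin.le_def, Fin.ext_iff]
    split_ifs <;> first | (exfalso; omega) | norm_num

lemma Bmat_mul_Tmat (n : ℕ) : Bmat n * Tmat n = 1 := by
  ext i j
  rw [Bmat, Matrix.sub_mul, Matrix.one_mul, Matrix.sub_apply]
  rcases eq_or_lt_of_le (Nat.succ_le_of_lt i.2) with hi | hi
  · rw [Nmat_mul_last _ (by omega), sub_zero]
    simp only [Tmat, Matrix.one_apply, Fin.le_def, Fin.ext_iff]
    have := j.2
    split_ifs <;> first | (exfalso; omega) | rfl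
  · obtain ⟨m, hm⟩ : ∃ m : Fin n, (m : ℕ) = (i : ℕ) + 1 :=
      ⟨⟨(i : ℕ) + 1, hi⟩, by simp only [Fin.val_mk]⟩
    rw [Nmat_mul_succ _ hm]
    simp only [Tmat, Matrix.one_apply, Fin.le_def, Fin.ext_iff]
    split_ifs <;> first | (exfalso; omega) | norm_num

lemma G_mul_L (n : ℕ) :
    ((Tmat n)ᴴ * Tmat n) * (Bmat n * (Bmat n)ᴴ) = 1 := by
  have h1 : (Tmat n)ᴴ * Tmat n * (Bmat n * (Bmat n)ᴴ)
      = (Tmat n)ᴴ * (Tmat n * Bmat n) * (Bmat n)ᴴ := by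
    simp only [Matrix.mul_assoc]
  rw [h1, Tmat_mul_Bmat, Matrix.mul_one, ← Matrix.conjTranspose_mul,
    Bmat_mul_Tmat, Matrix.conjTranspose_one]


variable {n : ℕ}

noncomputable def th (n : ℕ) (k : Fin n) : ℝ :=
  (2 * (k : ℕ) + 1) * Real.pi / (2 * n + 1)

noncomputable def evec (n : ℕ) (k : Fin n) : Fin n → ℂ :=
  fun j => ((Real.sin (((j : ℕ) + 1) * th n k) : ℝ) : ℂ)

lemma th_pos (k : Fin n) : 0 < th n k := by
  apply div_pos (by positivity) (by positivity)

lemma th_lt_pi (k : Fin n) : th n k < Real.pi := by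
  rw [th, div_lt_iff₀ (by positivity)]
  have hk : ((k : ℕ) : ℝ) < n := by exact_mod_cast k.2
  nlinarith [Real.pi_pos]

lemma sin_rec (θ : ℝ) (a : ℝ) :
    Real.sin (a * θ) + Real.sin ((a + 2) * θ)
      = 2 * Real.cos θ * Real.sin ((a + 1) * θ) := by
  have h1 : a * θ = (a + 1) * θ - θ := by ring
  have h2 : (a + 2) * θ = (a + 1) * θ + θ := by ring
  rw [h1, h2, Real.sin_sub, Real.sin_add]
  ring

lemma sin_boundary (k : Fin n) :
    Real.sin ((n + 1) * th n k) = Real.sin (n * th n k) := by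
  have h : ((n : ℝ) + 1) * th n k = (Real.pi - n * th n k) + (k : ℕ) * (2 * Real.pi) := by
    rw [th]
    field_simp
    ring
  rw [h, Real.sin_add_nat_mul_two_pi, Real.sin_pi_sub]

/-- The eigenvalue of `L = B * Bᴴ`. -/
noncomputable def lam (n : ℕ) (k : Fin n) : ℝ := 2 - 2 * Real.cos (th n k)

lemma lam_pos (k : Fin n) : 0 < lam n k := by
  have h : Real.cos (th n k) < 1 := by
    have := Real.cos_lt_cos_of_nonneg_of_le_pi (le_refl 0) (le_of_lt (th_lt_pi k)) (th_pos k)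
    simpa using this
  simp only [lam]; linarith

lemma eigen_L {n : ℕ} (k : Fin n) :
    (Bmat n * (Bmat n)ᴴ) *ᵥ evec n k
      = ((lam n k : ℝ) : ℂ) • evec n k := by
  set θ := th n k with hθ
  rw [← Matrix.mulVec_mulVec]
  have hBH : (Bmat n)ᴴ = 1 - (Nmat n)ᴴ := by
    rw [Bmat, Matrix.conjTranspose_sub, Matrix.conjTranspose_one]
  have hw : (Bmat n)ᴴ *ᵥ evec n k
      = fun j : Fin n => ((Real.sin (((j : ℕ) + 1) * θ) - Real.sin ((j : ℕ) * θ) : ℝ) : ℂ) := by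
    funext j
    rw [hBH, Matrix.sub_mulVec, Matrix.one_mulVec, Pi.sub_apply]
    rcases Nat.eq_zero_or_pos (j : ℕ) with hj | hj
    · rw [NmatH_mulVec_zero _ hj]
      simp only [evec, hj]
      norm_num
      rfl
    · obtain ⟨m, hm⟩ : ∃ m : Fin n, (j : ℕ) = (m : ℕ) + 1 :=
        ⟨⟨(j : ℕ) - 1, by omega⟩, by simp only [Fin.val_mk]; omega⟩
      rw [NmatH_mulVec_succ _ hm]
      have hm' : ((j : ℕ) : ℝ) = ((m : ℕ) : ℝ) + 1 := by exact_mod_cast hm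
      simp only [evec, hm']
      push_cast
      ring_nf
      rfl
  rw [hw, Bmat, Matrix.sub_mulVec, Matrix.one_mulVec]
  funext i
  simp only [Pi.sub_apply, Pi.smul_apply, smul_eq_mul, evec]
  rcases eq_or_lt_of_le (Nat.succ_le_of_lt i.2) with hi | hi
  · -- last row : i + 1 = n
    rw [Nmat_mulVec_last _ (by omega), sub_zero, ← Complex.ofReal_mul, Complex.ofReal_inj]
    have hn' : (n : ℝ) = ((i : ℕ) : ℝ) + 1 := by
      exact_mod_cast (by omega : n = (i : ℕ) + 1)
    have hb := sin_boundary (n := n) k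
    rw [← hθ, hn'] at hb
    have hr := sin_rec θ (((i : ℕ) : ℝ))
    simp only [lam, ← hθ]
    ring_nf at hb hr ⊢
    linarith [hb, hr]
  · obtain ⟨m, hm⟩ : ∃ m : Fin n, (m : ℕ) = (i : ℕ) + 1 :=
      ⟨⟨(i : ℕ) + 1, hi⟩, by simp only [Fin.val_mk]⟩
    rw [Nmat_mulVec_succ _ hm, ← Complex.ofReal_sub, ← Complex.ofReal_mul,
      Complex.ofReal_inj]
    have hm' : ((m : ℕ) : ℝ) = ((i : ℕ) : ℝ) + 1 := by exact_mod_cast hm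
    rw [hm']
    have hr := sin_rec θ (((i : ℕ) : ℝ))
    simp only [lam, ← hθ]
    ring_nf at hr ⊢
    linarith [hr]



noncomputable def mu (n : ℕ) (k : Fin n) : ℝ := (lam n k)⁻¹

lemma eigen_G {n : ℕ} (k : Fin n) :
    ((Tmat n)ᴴ * Tmat n) *ᵥ evec n k = ((mu n k : ℝ) : ℂ) • evec n k := by
  have h1 : (((Tmat n)ᴴ * Tmat n) * (Bmat n * (Bmat n)ᴴ)) *ᵥ evec n k = evec n k := by
    rw [G_mul_L, Matrix.one_mulVec]
  rw [← Matrix.mulVec_mulVec, eigen_L, Matrix.mulVec_smul] at h1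
  have hc : ((lam n k : ℝ) : ℂ) ≠ 0 := by
    exact Complex.ofReal_ne_zero.mpr (ne_of_gt (lam_pos k))
  have h2 : ((lam n k : ℝ) : ℂ)⁻¹ • (((lam n k : ℝ) : ℂ) • (((Tmat n)ᴴ * Tmat n) *ᵥ evec n k))
      = ((lam n k : ℝ) : ℂ)⁻¹ • evec n k := by rw [h1]
  rw [inv_smul_smul₀ hc] at h2
  rw [mu, Complex.ofReal_inv]
  exact h2

lemma evec_ne_zero {n : ℕ} (hn : 0 < n) (k : Fin n) : evec n k ≠ 0 := by
  intro h
  have h0 := congrFun h (⟨0, hn⟩ : Fin n)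
  simp only [evec, Pi.zero_apply, Complex.ofReal_eq_zero, Fin.val_mk] at h0
  norm_num at h0
  have : 0 < Real.sin (th n k) := Real.sin_pos_of_pos_of_lt_pi (th_pos k) (th_lt_pi k)
  linarith

lemma exists_eig {n : ℕ} (hn : 0 < n) (k : Fin n) :
    ∃ i, (Matrix.isHermitian_conjTranspose_mul_self (Tmat n)).eigenvalues i = mu n k := by
  classical
  have hG := Matrix.isHermitian_conjTranspose_mul_self (Tmat n)
  set c : ℂ := ((mu n k : ℝ) : ℂ) with hc
  have hdet : Matrix.det (c • (1 : Matrix (Fin n) (Fin n) ℂ) - (Tmat n)ᴴ * Tmat n) = 0 := by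
    rw [← Matrix.exists_mulVec_eq_zero_iff]
    refine ⟨evec n k, evec_ne_zero hn k, ?_⟩
    rw [Matrix.sub_mulVec, Matrix.smul_mulVec, Matrix.one_mulVec, eigen_G, sub_self]
  have hspec := (Matrix.isHermitian_conjTranspose_mul_self (Tmat n)).spectral_theorem
  set U : Matrix (Fin n) (Fin n) ℂ :=
    ((Matrix.IsHermitian.eigenvectorUnitary
        (Matrix.isHermitian_conjTranspose_mul_self (Tmat n)) : Matrix.unitaryGroup (Fin n) ℂ) :
      Matrix (Fin n) (Fin n) ℂ) with hU
  have hUU : U * star U = 1 :=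
    Matrix.mem_unitaryGroup_iff.mp
      (Matrix.IsHermitian.eigenvectorUnitary
        (Matrix.isHermitian_conjTranspose_mul_self (Tmat n))).2
  set D : Matrix (Fin n) (Fin n) ℂ :=
    Matrix.diagonal (RCLike.ofReal ∘
      (Matrix.isHermitian_conjTranspose_mul_self (Tmat n)).eigenvalues) with hD
  have key : c • (1 : Matrix (Fin n) (Fin n) ℂ) - (Tmat n)ᴴ * Tmat n
      = U * (c • 1 - D) * star U := by
    conv_lhs => rw [hspec, Unitary.conjStarAlgAut_apply]
    rw [Matrix.mul_sub, Matrix.sub_mul, Matrix.mul_smul, Matrix.mul_one,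
      Matrix.smul_mul, hUU]
  rw [key, Matrix.det_mul, Matrix.det_mul] at hdet
  have h2 : Matrix.det U * Matrix.det (star U) = 1 := by
    rw [← Matrix.det_mul, hUU, Matrix.det_one]
  have h3 : Matrix.det (c • (1 : Matrix (Fin n) (Fin n) ℂ) - D)
      * (Matrix.det U * Matrix.det (star U)) = 0 := by rw [← hdet]; ring
  rw [h2, mul_one] at h3
  rw [Matrix.smul_one_eq_diagonal, hD, Matrix.diagonal_sub, Matrix.det_diagonal] at h3
  obtain ⟨i, _, hi⟩ := Finset.prod_eq_zero_iff.mp h3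
  refine ⟨i, ?_⟩
  simp only [Function.comp] at hi
  have h4 := sub_eq_zero.mp hi
  rw [hc] at h4
  exact Complex.ofReal_inj.mp h4.symm

lemma mu_inj {n : ℕ} : Function.Injective (mu n) := by
  intro a b hab
  have hla : lam n a = lam n b := inv_injective hab
  have hcos : Real.cos (th n a) = Real.cos (th n b) := by
    simp only [lam] at hla; linarith
  have hth : th n a = th n b :=
    Real.injOn_cos ⟨(th_pos a).le, (th_lt_pi a).le⟩ ⟨(th_pos b).le, (th_lt_pi b).le⟩ hcos
  have hpos : ((0:ℝ) < 2*(n:ℝ)+1) := by positivity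
  rw [th, th, div_eq_div_iff hpos.ne' hpos.ne'] at hth
  have h2 := mul_right_cancel₀ hpos.ne' hth
  have h3 := mul_right_cancel₀ Real.pi_ne_zero h2
  have hab' : ((a : ℕ) : ℝ) = ((b : ℕ) : ℝ) := by linarith
  exact Fin.ext (by exact_mod_cast hab')

lemma sum_eig {n : ℕ} (hn : 0 < n) (f : ℝ → ℝ) :
    ∑ i, f ((Matrix.isHermitian_conjTranspose_mul_self (Tmat n)).eigenvalues i)
      = ∑ k, f (mu n k) := by
  classical
  choose σ hσ using fun k => exists_eig hn k
  have hinj : Function.Injective σ := by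
    intro a b hab
    apply mu_inj
    rw [← hσ a, ← hσ b, hab]
  have hbij : Function.Bijective σ := Finite.injective_iff_bijective.mp hinj
  exact (Fintype.sum_bijective σ hbij (fun k => f (mu n k))
    (fun i => f ((Matrix.isHermitian_conjTranspose_mul_self (Tmat n)).eigenvalues i))
    (fun k => congrArg f (hσ k).symm)).symm



lemma sqrt_mu_le {n : ℕ} (k : Fin n) :
    Real.sqrt (mu n k) ≤ (2*(n:ℝ)+1)/(2*(2*((k:ℕ):ℝ)+1)) := by
  have hθpos := th_pos k
  have hθpi := th_lt_pi k
  have hπ := Real.pi_pos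
  have hs : 0 < Real.sin (th n k / 2) :=
    Real.sin_pos_of_pos_of_lt_pi (by linarith) (by linarith)
  have h1 : lam n k = (2*Real.sin (th n k / 2))^2 := by
    have h := Real.sin_sq_eq_half_sub (th n k / 2)
    rw [show 2*(th n k/2) = th n k by ring] at h
    rw [lam]; nlinarith [h]
  have h2 : Real.sqrt (mu n k) = (2*Real.sin (th n k / 2))⁻¹ := by
    rw [mu, h1, Real.sqrt_inv, Real.sqrt_sq (by positivity)]
  rw [h2]
  have hpos : (0:ℝ) < 2*(n:ℝ)+1 := by positivity
  have hJ := Real.mul_le_sin (x := th n k / 2) (by linarith) (by linarith)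
  have hθπ : 2/Real.pi * (th n k / 2) = (2*((k:ℕ):ℝ)+1)/(2*(n:ℝ)+1) := by
    rw [th]; field_simp
  rw [hθπ] at hJ
  have hj : 2*((2*((k:ℕ):ℝ)+1)/(2*(n:ℝ)+1)) ≤ 2*Real.sin (th n k / 2) := by linarith
  have hpos2 : 0 < 2*((2*((k:ℕ):ℝ)+1)/(2*(n:ℝ)+1)) := by positivity
  have hinv := inv_anti₀ hpos2 hj
  refine hinv.trans (le_of_eq ?_)
  rw [eq_div_iff (by positivity)]
  field_simp

lemma rpow_step {p a b : ℝ} (hp0 : 0 < p) (hp1 : p < 1) (ha : 0 < a) (hab : a ≤ b) :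
    (1-p) * ((b-a) * b^(-p)) ≤ b^(1-p) - a^(1-p) := by
  have hb : 0 < b := lt_of_lt_of_le ha hab
  set t := a/b with ht
  have ht0 : 0 < t := div_pos ha hb
  have key : t^(1-p) ≤ (1-p)*t + p := by
    have h := Real.geom_mean_le_arith_mean2_weighted
      (by linarith : (0:ℝ) ≤ 1-p) hp0.le ht0.le (zero_le_one) (by ring)
    simpa using h
  have hbp : (0:ℝ) < b^(1-p) := Real.rpow_pos_of_pos hb _
  have e1 : a^(1-p) = t^(1-p) * b^(1-p) := by
    rw [ht, Real.div_rpow ha.le hb.le]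
    field_simp
  have e2 : (b-a) * b^(-p) = (1-t) * b^(1-p) := by
    have e3 : b^(1-p) = b * b^(-p) := by
      rw [show (1:ℝ)-p = 1 + (-p) by ring, Real.rpow_add hb, Real.rpow_one]
    rw [e3, ht]
    field_simp
  calc (1-p) * ((b-a) * b^(-p)) = ((1-p)*(1-t)) * b^(1-p) := by rw [e2]; ring
    _ ≤ (1 - t^(1-p)) * b^(1-p) := by
        apply mul_le_mul_of_nonneg_right _ hbp.le
        nlinarith [key]
    _ = b^(1-p) - a^(1-p) := by rw [e1]; ring

set_option maxHeartbeats 1000000 in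
lemma sum_bound (p : ℝ) (hp0 : 0 < p) (hp1 : p < 1) (n : ℕ) (hn : 1 ≤ n) :
    ∑ k : Fin n, ((2*(n:ℝ)+1)/(2*(2*((k:ℕ):ℝ)+1)))^p
      ≤ 2*(n:ℝ)/(1 - (2:ℝ)^(p-1)) := by
  have hq : 0 < 1 - p := by linarith
  have hden1 : (2:ℝ)^(p-1) < 1 :=
    Real.rpow_lt_one_of_one_lt_of_neg one_lt_two (by linarith)
  have hden0 : 0 < 1 - (2:ℝ)^(p-1) := by linarith
  have hlog2 : 0 < Real.log 2 := Real.log_pos one_lt_two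
  have hl9 : Real.log 2 < 0.6931471808 := Real.log_two_lt_d9
  have hlogle : 1 - (2:ℝ)^(p-1) ≤ (1-p)*Real.log 2 := by
    have h := Real.add_one_le_exp (Real.log 2 * (p-1))
    rw [← Real.rpow_def_of_pos two_pos] at h
    nlinarith [h]
  have hmain : ∑ k : Fin n, ((2*(n:ℝ)+1)/(2*(2*((k:ℕ):ℝ)+1)))^p
      ≤ 2*(n:ℝ)/((1-p)*Real.log 2) := by
    rcases eq_or_lt_of_le hn with h1 | h2
    · -- n = 1
      have hn1 : n = 1 := h1.symm
      subst hn1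
      rw [Fin.sum_univ_one]
      have hA : ((3:ℝ)/2)^p ≤ 3/2 := by
        calc ((3:ℝ)/2)^p ≤ ((3:ℝ)/2)^(1:ℝ) :=
              Real.rpow_le_rpow_of_exponent_le (by norm_num) (by linarith)
          _ = 3/2 := Real.rpow_one _
      have hB : (3:ℝ)/2 ≤ 2/((1-p)*Real.log 2) := by
        rw [le_div_iff₀ (by positivity)]
        nlinarith [hl9, hlog2, hq, hp0]
      have hcast : ((2*((1:ℕ):ℝ)+1)/(2*(2*(((0 : Fin 1):ℕ):ℝ)+1))) = (3:ℝ)/2 := by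
        norm_num
      rw [hcast]
      push_cast
      linarith [hA, hB]
    · -- 2 ≤ n
      have hn2 : (2:ℝ) ≤ (n:ℝ) := by exact_mod_cast h2
      obtain ⟨c, hc⟩ : ∃ c : ℝ, c = 2*(n:ℝ)+1 := ⟨_, rfl⟩
      have hcpos : 0 < c := by rw [hc]; positivity
      have h2q : (0:ℝ) < 2*(1-p) := by linarith
      have hterm : ∀ k : Fin n, ((2*(n:ℝ)+1)/(2*(2*((k:ℕ):ℝ)+1)))^p
          = (c/2)^p * ((2*((k:ℕ):ℝ)+1))^(-p) := by
        intro k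
        have hx : (0:ℝ) < 2*((k:ℕ):ℝ)+1 := by positivity
        rw [Real.rpow_neg hx.le, ← Real.inv_rpow hx.le,
          ← Real.mul_rpow (by positivity) (by positivity), ← hc]
        congr 1 <;> (try field_simp) <;> (try ring)
      rw [Finset.sum_congr rfl (fun k _ => hterm k), ← Finset.mul_sum]
      -- bound the inner sum
      have hsum : ∑ k : Fin n, ((2*((k:ℕ):ℝ)+1))^(-p)
          ≤ 1 + c^(1-p)/(2*(1-p)) := by
        rw [Fin.sum_univ_eq_sum_range (fun i => ((2*(i:ℝ)+1))^(-p)) n]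
        obtain ⟨m, rfl⟩ : ∃ m, n = m + 1 := ⟨n-1, by omega⟩
        rw [Finset.sum_range_succ']
        have hg0 : ((2*((0:ℕ):ℝ)+1))^(-p) = 1 := by norm_num
        rw [hg0]
        have hstep : ∀ i : ℕ, ((2*((i+1:ℕ):ℝ)+1))^(-p)
            ≤ ((2*((i+1:ℕ):ℝ)+1)^(1-p) - (2*((i:ℕ):ℝ)+1)^(1-p))/(2*(1-p)) := by
          intro i
          have hx : (0:ℝ) < 2*((i:ℕ):ℝ)+1 := by positivity
          have hstep' := rpow_step (a := 2*((i:ℕ):ℝ)+1) (b := 2*((i+1:ℕ):ℝ)+1)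
            hp0 hp1 hx (by push_cast; linarith)
          rw [le_div_iff₀ h2q]
          have hba : (2*((i+1:ℕ):ℝ)+1) - (2*((i:ℕ):ℝ)+1) = 2 := by push_cast; ring
          rw [hba] at hstep'
          nlinarith [hstep']
        have htel : ∑ i ∈ Finset.range m, ((2*((i+1:ℕ):ℝ)+1))^(-p)
            ≤ ((2*((m:ℕ):ℝ)+1)^(1-p) - (2*((0:ℕ):ℝ)+1)^(1-p))/(2*(1-p)) := by
          calc ∑ i ∈ Finset.range m, ((2*((i+1:ℕ):ℝ)+1))^(-p)
              ≤ ∑ i ∈ Finset.range m,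
                ((2*((i+1:ℕ):ℝ)+1)^(1-p) - (2*((i:ℕ):ℝ)+1)^(1-p))/(2*(1-p)) :=
                Finset.sum_le_sum fun i _ => hstep i
            _ = ((2*((m:ℕ):ℝ)+1)^(1-p) - (2*((0:ℕ):ℝ)+1)^(1-p))/(2*(1-p)) := by
                rw [← Finset.sum_div, Finset.sum_range_sub
                  (fun i => ((2*((i:ℕ):ℝ)+1))^(1-p))]
        have hmle : ((2*((m:ℕ):ℝ)+1))^(1-p) ≤ c^(1-p) := by
          apply Real.rpow_le_rpow (by positivity) _ (by linarith)
          rw [hc]; push_cast; linarith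
        have h01 : ((2*((0:ℕ):ℝ)+1))^(1-p) = 1 := by norm_num
        rw [h01] at htel
        have hfin : ((2*((m:ℕ):ℝ)+1)^(1-p) - 1)/(2*(1-p)) ≤ c^(1-p)/(2*(1-p)) := by
          rw [div_le_div_iff₀ h2q h2q]
          nlinarith [hmle, h2q]
        linarith [htel, hfin]
      -- combine
      have hS : (c/2)^p * (∑ k : Fin n, ((2*((k:ℕ):ℝ)+1))^(-p))
          ≤ (c/2)^p * (1 + c^(1-p)/(2*(1-p))) :=
        mul_le_mul_of_nonneg_left hsum (by positivity)
      refine hS.trans ?_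
      have e3 : (c/2)^p * c^(1-p) = c/(2:ℝ)^p := by
        rw [Real.div_rpow hcpos.le (by norm_num : (0:ℝ) ≤ 2), div_mul_eq_mul_div,
          ← Real.rpow_add hcpos]
        norm_num
      have h2p : (1:ℝ) ≤ (2:ℝ)^p := Real.one_le_rpow one_le_two hp0.le
      have hc2 : (1:ℝ) ≤ c/2 := by rw [hc]; linarith
      have hcp : (c/2)^p ≤ c/2 := by
        calc (c/2)^p ≤ (c/2)^(1:ℝ) := Real.rpow_le_rpow_of_exponent_le hc2 hp1.le
          _ = c/2 := Real.rpow_one _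
      have hexp : (c/2)^p * (1 + c^(1-p)/(2*(1-p)))
          = (c/2)^p + ((c/2)^p * c^(1-p))/(2*(1-p)) := by ring
      rw [hexp, e3]
      have hb2 : (c/(2:ℝ)^p)/(2*(1-p)) ≤ c/(2*(1-p)) := by
        have hds : c/(2:ℝ)^p ≤ c := div_le_self hcpos.le h2p
        rw [div_le_div_iff₀ h2q h2q]
        nlinarith [hds, h2q]
      have hfinal : c/2 + c/(2*(1-p)) ≤ 2*(n:ℝ)/((1-p)*Real.log 2) := by
        rw [le_div_iff₀ (by positivity)]
        have hexpand : (c/2 + c/(2*(1-p))) * ((1-p)*Real.log 2)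
            = c*(1-p)*Real.log 2/2 + c*Real.log 2/2 := by
          field_simp
        rw [hexpand]
        have haux1 : c*(1-p)*Real.log 2 ≤ c*Real.log 2 := by
          have h := mul_nonneg (mul_nonneg hcpos.le hp0.le) hlog2.le
          nlinarith [h]
        have haux2 : c*Real.log 2 ≤ c*0.6931471808 :=
          mul_le_mul_of_nonneg_left hl9.le hcpos.le
        have haux3 : c*0.6931471808 ≤ 2*(n:ℝ) := by rw [hc]; nlinarith [hn2]
        linarith [haux1, haux2, haux3]
      linarith [hcp, hb2, hfinal]
  refine hmain.trans ?_
  apply div_le_div_of_nonneg_left (by positivity) hden0 hlogle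

end TriAux


/-- Upper bound in Lemma 5.1: for `0 < p < 1`,
`‖T_n‖_{L_p(M_n, tr_n)}^p = ∑ᵢ sᵢ(T_n)^p ≤ 2n / (1 - 2^{p-1})`. -/
theorem triangular_schatten_upper (p : ℝ) (hp0 : 0 < p) (hp1 : p < 1)
    (n : ℕ) (hn : 1 ≤ n) :
    ∑ i, singVal (Tmat n) i ^ p ≤ 2 * n / (1 - (2 : ℝ) ^ (p - 1)) := by
  have hn0 : 0 < n := hn
  have hstep1 : ∑ i, singVal (Tmat n) i ^ p
      = ∑ k, Real.sqrt (TriAux.mu n k) ^ p := by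
    have h := TriAux.sum_eig (n := n) hn0 (fun x => Real.sqrt x ^ p)
    simpa [singVal] using h
  rw [hstep1]
  have hstep2 : ∑ k : Fin n, Real.sqrt (TriAux.mu n k) ^ p
      ≤ ∑ k : Fin n, ((2*(n:ℝ)+1)/(2*(2*((k:ℕ):ℝ)+1)))^p :=
    Finset.sum_le_sum fun k _ =>
      Real.rpow_le_rpow (Real.sqrt_nonneg _) (TriAux.sqrt_mu_le k) hp0.le
  refine hstep2.trans ?_
  have := TriAux.sum_bound p hp0 hp1 n hn
  linarith [this]
end

section
/- Fix $0 < p < 1/2$. There exist constants $d_p, e_p > 0$ such that for every $N \geq 1$, every $t \in (0,1)$, every $\mu > 0$, and every projection $e \in M_N$ with $\tau_N(1-e) \leq t$ satisfying $\|Y_n e\|_\infty \leq 2\mu$ for all $1 \leq n \leq N$ (where $Y_n = \sum_{1\leq k,l\leq n} e_{k,l}$), one has $N^p \leq d_p\,\mu^p\,N^{p/2} + e_p\,t^{1/2}\,N^p$. -/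
set_option maxHeartbeats 1000000
set_option synthInstance.maxHeartbeats 400000


open scoped BigOperators

-- auxiliary sum computation
lemma sum_ite_lt {M : Type*} [AddCommMonoid M] (N n : ℕ) (h : n ≤ N) (c : M) :
    ∑ j : Fin N, (if (j : ℕ) < n then c else 0) = n • c := by
  rw [Fin.sum_univ_eq_sum_range (fun j => if j < n then c else 0) N, ← Finset.sum_filter]
  have : (Finset.range N).filter (fun j => j < n) = Finset.range n := by
    ext j; simp; omega
  rw [this, Finset.sum_const, Finset.card_range]

lemma sum_rpow_aux {a : ℝ} (ha : 0 < a) (ha1 : a < 1) (N : ℕ) :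
    (1 - a) * ∑ k ∈ Finset.range N, ((k : ℝ) + 1) ^ (-a) ≤ (N : ℝ) ^ (1 - a) := by
  have key : ∀ k : ℕ, (1 - a) * ((k : ℝ) + 1) ^ (-a) ≤
      (((k + 1 : ℕ) : ℝ)) ^ (1 - a) - ((k : ℕ) : ℝ) ^ (1 - a) := by
    intro k
    push_cast
    set x : ℝ := (k : ℝ) + 1 with hx
    have hx1 : (1 : ℝ) ≤ x := by have := Nat.cast_nonneg (α := ℝ) k; linarith
    have hx0 : (0 : ℝ) < x := by linarith
    have hb := rpow_one_add_le_one_add_mul_self (s := -(1/x)) (p := 1 - a)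
      (by rw [neg_le_neg_iff] ; exact div_le_one_of_le₀ hx1 hx0.le) (by linarith) (by linarith)
    have hmul := mul_le_mul_of_nonneg_left hb (le_of_lt (Real.rpow_pos_of_pos hx0 (1 - a)))
    have hxinv : x ^ (1 - a) * (1/x) = x ^ (-a) := by
      rw [one_div, ← Real.rpow_neg_one x, ← Real.rpow_add hx0]
      congr 1; ring
    have h1 : x ^ (1 - a) * (1 + -(1/x)) ^ (1 - a) = (x - 1) ^ (1 - a) := by
      rw [← Real.mul_rpow hx0.le (by have := div_le_one_of_le₀ hx1 hx0.le; linarith)]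
      congr 1
      field_simp
      ring
    have h2 : x ^ (1 - a) * (1 + (1 - a) * -(1/x)) = x ^ (1 - a) - (1 - a) * x ^ (-a) := by
      rw [← hxinv]; ring
    rw [h1, h2] at hmul
    have hk : (k : ℝ) = x - 1 := by rw [hx]; ring
    rw [hk]
    linarith
  calc (1 - a) * ∑ k ∈ Finset.range N, ((k : ℝ) + 1) ^ (-a)
      = ∑ k ∈ Finset.range N, (1 - a) * ((k : ℝ) + 1) ^ (-a) := Finset.mul_sum _ _ _
    _ ≤ ∑ k ∈ Finset.range N, ((((k + 1 : ℕ)) : ℝ) ^ (1 - a) - ((k : ℕ) : ℝ) ^ (1 - a)) :=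
        Finset.sum_le_sum fun k _ => key k
    _ = ((N : ℕ) : ℝ) ^ (1 - a) - ((0 : ℕ) : ℝ) ^ (1 - a) :=
        Finset.sum_range_sub (fun k => ((k : ℕ) : ℝ) ^ (1 - a)) N
    _ = (N : ℝ) ^ (1 - a) := by
        simp [Real.zero_rpow (by linarith : (1 : ℝ) - a ≠ 0)]

lemma opNorm_mulVec_le {N : ℕ} (A : Matrix (Fin N) (Fin N) ℂ) (v : Fin N → ℂ) :
    ‖(WithLp.equiv 2 (Fin N → ℂ)).symm (A.mulVec v)‖ ≤
      opNorm A * ‖(WithLp.equiv 2 (Fin N → ℂ)).symm v‖ := by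
  have h := (Matrix.toEuclideanCLM (𝕜 := ℂ) A).le_opNorm ((WithLp.equiv 2 (Fin N → ℂ)).symm v)
  rwa [WithLp.equiv_symm_apply, Matrix.toEuclideanCLM_toLp] at h

lemma opNorm_conjTranspose {N : ℕ} (A : Matrix (Fin N) (Fin N) ℂ) :
    opNorm A.conjTranspose = opNorm A := by
  unfold opNorm
  rw [← Matrix.star_eq_conjTranspose, map_star, ContinuousLinearMap.star_eq_adjoint]
  exact ContinuousLinearMap.adjoint.norm_map _

lemma opNorm_proj_le_one {N : ℕ} (e : Matrix (Fin N) (Fin N) ℂ)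
    (he : e.IsHermitian) (hee : e * e = e) : opNorm e ≤ 1 := by
  have h1 : ‖Matrix.toEuclideanCLM (𝕜 := ℂ) e‖ * ‖Matrix.toEuclideanCLM (𝕜 := ℂ) e‖
      = ‖Matrix.toEuclideanCLM (𝕜 := ℂ) e‖ := by
    rw [← CStarRing.norm_star_mul_self (x := Matrix.toEuclideanCLM (𝕜 := ℂ) e)]
    rw [← map_star, ← map_mul]
    congr 2
    rw [Matrix.star_eq_conjTranspose, he.eq, hee]
  unfold opNorm
  nlinarith [norm_nonneg (Matrix.toEuclideanCLM (𝕜 := ℂ) e)]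

section main

variable {N : ℕ}

/-- the indicator vector of `[0,n)`. -/
def wvec (N n : ℕ) : Fin N → ℂ := fun i => if (i : ℕ) < n then 1 else 0

lemma Ymat_mulVec_wvec (n : ℕ) (hn : n ≤ N) :
    (Ymat N n).mulVec (wvec N n) = (n : ℂ) • wvec N n := by
  funext i
  simp only [Matrix.mulVec, dotProduct, Ymat, wvec, Pi.smul_apply, smul_eq_mul]
  by_cases hi : (i : ℕ) < n
  · simp only [hi, true_and, if_true, mul_one]
    have : ∀ j : Fin N, (if (j : ℕ) < n then (1:ℂ) else 0) * (if (j : ℕ) < n then (1:ℂ) else 0)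
        = (if (j : ℕ) < n then (1:ℂ) else 0) := by
      intro j; by_cases hj : (j : ℕ) < n <;> simp [hj]
    calc ∑ j : Fin N, (if (j : ℕ) < n then (1:ℂ) else 0) * (if (j : ℕ) < n then (1:ℂ) else 0)
        = ∑ j : Fin N, (if (j : ℕ) < n then (1:ℂ) else 0) := by
          exact Finset.sum_congr rfl fun j _ => this j
      _ = n • (1 : ℂ) := sum_ite_lt N n hn 1
      _ = (n : ℂ) := by simp
  · simp [hi]

lemma norm_wvec (n : ℕ) (hn : n ≤ N) :
    ‖(WithLp.equiv 2 (Fin N → ℂ)).symm (wvec N n)‖ = Real.sqrt n := by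
  rw [EuclideanSpace.norm_eq]
  congr 1
  have : ∀ i : Fin N, ‖((WithLp.equiv 2 (Fin N → ℂ)).symm (wvec N n)) i‖ ^ 2
      = (if (i : ℕ) < n then (1:ℝ) else 0) := by
    intro i
    simp only [WithLp.equiv_symm_apply, PiLp.toLp_apply, wvec]
    by_cases hi : (i : ℕ) < n <;> simp [hi]
  rw [Finset.sum_congr rfl fun i _ => this i, sum_ite_lt N n hn (1:ℝ)]
  simp

end main

section main2
variable {N : ℕ}

lemma Ymat_conjTranspose (n : ℕ) : (Ymat N n).conjTranspose = Ymat N n := by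
  funext i j
  simp only [Matrix.conjTranspose_apply, Ymat]
  by_cases h1 : (j : ℕ) < n <;> by_cases h2 : (i : ℕ) < n <;> simp [h1, h2]

lemma norm_e_mulVec_wvec (e : Matrix (Fin N) (Fin N) ℂ) (he : e.IsHermitian)
    (μ : ℝ) (hμ : 0 < μ)
    (hY : ∀ n : ℕ, 1 ≤ n → n ≤ N → opNorm (Ymat N n * e) ≤ 2 * μ)
    (n : ℕ) (hn : n ≤ N) :
    ‖(WithLp.equiv 2 (Fin N → ℂ)).symm (e.mulVec (wvec N n))‖ ≤ 2 * μ / Real.sqrt n := by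
  rcases Nat.eq_zero_or_pos n with rfl | hn1
  · have : wvec N 0 = 0 := by funext i; simp [wvec]
    simp [this, Real.sqrt_zero]
  · have hcj : (Ymat N n * e).conjTranspose = e * Ymat N n := by
      rw [Matrix.conjTranspose_mul, he.eq, Ymat_conjTranspose]
    have hop : opNorm (e * Ymat N n) ≤ 2 * μ := by
      rw [← hcj, opNorm_conjTranspose]; exact hY n hn1 hn
    have h := opNorm_mulVec_le (e * Ymat N n) (wvec N n)
    rw [← Matrix.mulVec_mulVec, Ymat_mulVec_wvec n hn, Matrix.mulVec_smul,
      WithLp.equiv_symm_apply, WithLp.toLp_smul, norm_smul, ← WithLp.equiv_symm_apply, norm_wvec n hn] at h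
    have hns : (0 : ℝ) < Real.sqrt n := Real.sqrt_pos.2 (by exact_mod_cast hn1)
    have hnc : ‖(n : ℂ)‖ = (n : ℝ) := by
      simp
    rw [hnc] at h
    have hsq : (n : ℝ) = Real.sqrt n * Real.sqrt n := (Real.mul_self_sqrt (by positivity)).symm
    have h2 : (n:ℝ) * ‖(WithLp.equiv 2 (Fin N → ℂ)).symm (e.mulVec (wvec N n))‖
        ≤ 2 * μ * Real.sqrt n := le_trans h (by
          exact mul_le_mul_of_nonneg_right hop hns.le)
    rw [le_div_iff₀ hns]
    refine le_of_mul_le_mul_left ?_ hns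
    calc √(n:ℝ) * (‖(WithLp.equiv 2 (Fin N → ℂ)).symm (e.mulVec (wvec N n))‖ * √(n:ℝ))
        = (√(n:ℝ) * √(n:ℝ)) * ‖(WithLp.equiv 2 (Fin N → ℂ)).symm (e.mulVec (wvec N n))‖ := by ring
      _ = (n:ℝ) * ‖(WithLp.equiv 2 (Fin N → ℂ)).symm (e.mulVec (wvec N n))‖ := by rw [← hsq]
      _ ≤ 2 * μ * √(n:ℝ) := h2
      _ = √(n:ℝ) * (2 * μ) := by ring

lemma single_eq_wvec_sub (k : Fin N) :
    Pi.single k (1:ℂ) = wvec N ((k:ℕ)+1) - wvec N (k:ℕ) := by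
  funext i
  simp only [Pi.single_apply, wvec, Pi.sub_apply]
  by_cases h1 : (i:ℕ) < (k:ℕ)
  · have : ¬ i = k := by intro h; subst h; omega
    simp [this, h1, Nat.lt_succ_of_lt h1]
  · by_cases h2 : (i:ℕ) = (k:ℕ)
    · have : i = k := Fin.ext h2
      simp [this, h1, Nat.lt_succ_self]
    · have hik : ¬ i = k := by intro h; subst h; omega
      have : ¬ (i:ℕ) < (k:ℕ)+1 := by omega
      simp [hik, h1, this]

lemma norm_single_one (k : Fin N) :
    ‖(WithLp.equiv 2 (Fin N → ℂ)).symm (Pi.single k (1:ℂ))‖ = 1 := by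
  rw [EuclideanSpace.norm_eq]
  have : ∀ i : Fin N, ‖((WithLp.equiv 2 (Fin N → ℂ)).symm (Pi.single k (1:ℂ))) i‖ ^ 2
      = (if i = k then (1:ℝ) else 0) := by
    intro i
    simp only [WithLp.equiv_symm_apply, PiLp.toLp_apply, Pi.single_apply]
    by_cases hi : i = k <;> simp [hi]
  rw [Finset.sum_congr rfl fun i _ => this i, Finset.sum_ite_eq' Finset.univ k (fun _ => (1:ℝ))]
  simp

lemma col_norm_le (e : Matrix (Fin N) (Fin N) ℂ) (he : e.IsHermitian)
    (μ : ℝ) (hμ : 0 < μ)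
    (hY : ∀ n : ℕ, 1 ≤ n → n ≤ N → opNorm (Ymat N n * e) ≤ 2 * μ)
    (k : Fin N) :
    ‖(WithLp.equiv 2 (Fin N → ℂ)).symm (e.mulVec (Pi.single k 1))‖
      ≤ 6 * μ / Real.sqrt ((k:ℕ)+1) := by
  have hk1 : ((k:ℕ)+1) ≤ N := k.2
  have ha := norm_e_mulVec_wvec e he μ hμ hY ((k:ℕ)+1) hk1
  have hb := norm_e_mulVec_wvec e he μ hμ hY (k:ℕ) (le_of_lt k.2)
  have hsplit : e.mulVec (Pi.single k 1)
      = e.mulVec (wvec N ((k:ℕ)+1)) - e.mulVec (wvec N (k:ℕ)) := by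
    rw [single_eq_wvec_sub, Matrix.mulVec_sub]
  have htri : ‖(WithLp.equiv 2 (Fin N → ℂ)).symm (e.mulVec (Pi.single k 1))‖
      ≤ ‖(WithLp.equiv 2 (Fin N → ℂ)).symm (e.mulVec (wvec N ((k:ℕ)+1)))‖
        + ‖(WithLp.equiv 2 (Fin N → ℂ)).symm (e.mulVec (wvec N (k:ℕ)))‖ := by
    rw [hsplit, WithLp.equiv_symm_apply, WithLp.toLp_sub]
    exact norm_sub_le _ _
  have hstep : 2 * μ / Real.sqrt (k:ℕ) ≤ 4 * μ / Real.sqrt ((k:ℕ)+1) := by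
    rcases Nat.eq_zero_or_pos (k:ℕ) with h0 | h0
    · rw [h0]
      simp only [Nat.cast_zero, Real.sqrt_zero, div_zero]
      positivity
    · have hks : (0:ℝ) < Real.sqrt (k:ℕ) := Real.sqrt_pos.2 (by exact_mod_cast h0)
      have hks1 : (0:ℝ) < Real.sqrt ((k:ℕ)+1) := Real.sqrt_pos.2 (by positivity)
      rw [div_le_div_iff₀ hks hks1]
      have h4 : Real.sqrt ((k:ℕ)+1) ≤ 2 * Real.sqrt (k:ℕ) := by
        have : ((k:ℕ):ℝ) + 1 ≤ 4 * (k:ℕ) := by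
          have : (1:ℝ) ≤ (k:ℕ) := by exact_mod_cast h0
          linarith
        calc Real.sqrt ((k:ℕ)+1) ≤ Real.sqrt (4 * (k:ℕ)) := Real.sqrt_le_sqrt this
          _ = Real.sqrt 4 * Real.sqrt (k:ℕ) := Real.sqrt_mul (by norm_num) _
          _ = 2 * Real.sqrt (k:ℕ) := by
              rw [show (4:ℝ) = 2^2 by norm_num, Real.sqrt_sq (by norm_num : (0:ℝ) ≤ 2)]
      nlinarith
  have hsum : 2 * μ / Real.sqrt ((k:ℕ)+1) + 4 * μ / Real.sqrt ((k:ℕ)+1)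
      = 6 * μ / Real.sqrt ((k:ℕ)+1) := by
    rw [← add_div]; ring_nf
  push_cast at ha ⊢
  linarith [ha, hb, htri, hstep]

lemma col_norm_le_one (e : Matrix (Fin N) (Fin N) ℂ) (he : e.IsHermitian)
    (hee : e * e = e) (k : Fin N) :
    ‖(WithLp.equiv 2 (Fin N → ℂ)).symm (e.mulVec (Pi.single k 1))‖ ≤ 1 := by
  have h := opNorm_mulVec_le e (Pi.single k 1)
  rw [norm_single_one] at h
  calc ‖(WithLp.equiv 2 (Fin N → ℂ)).symm (e.mulVec (Pi.single k 1))‖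
      ≤ opNorm e * 1 := h
    _ ≤ 1 * 1 := by
        have := opNorm_proj_le_one e he hee
        nlinarith
    _ = 1 := by ring

lemma col_norm_sq (e : Matrix (Fin N) (Fin N) ℂ) (k : Fin N) :
    ‖(WithLp.equiv 2 (Fin N → ℂ)).symm (e.mulVec (Pi.single k 1))‖ ^ 2
      = ∑ j : Fin N, ‖e j k‖ ^ 2 := by
  rw [EuclideanSpace.norm_eq, Real.sq_sqrt (by positivity)]
  refine Finset.sum_congr rfl fun j _ => ?_
  congr 1
  simp only [WithLp.equiv_symm_apply, PiLp.toLp_apply]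
  rw [Matrix.mulVec_single]
  simp

lemma trace_re_eq (e : Matrix (Fin N) (Fin N) ℂ) (he : e.IsHermitian)
    (hee : e * e = e) :
    (Matrix.trace e).re = ∑ k : Fin N, ∑ j : Fin N, ‖e j k‖ ^ 2 := by
  have hdiag : ∀ k : Fin N, e k k = ((∑ j : Fin N, ‖e j k‖ ^ 2 : ℝ) : ℂ) := by
    intro k
    conv_lhs => rw [← hee, Matrix.mul_apply]
    have : ∀ j : Fin N, e k j * e j k = ((‖e j k‖ ^ 2 : ℝ) : ℂ) := by
      intro j
      have h1 : e k j = star (e j k) := by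
        conv_lhs => rw [← he.eq]
        rw [Matrix.conjTranspose_apply]
      rw [h1, Complex.star_def, Complex.conj_mul']
      norm_cast
      try simp [Complex.sq_abs, Complex.normSq_eq_abs]
    rw [Finset.sum_congr rfl fun j _ => this j]
    push_cast
    try rfl
  have : Matrix.trace e = ((∑ k : Fin N, ∑ j : Fin N, ‖e j k‖ ^ 2 : ℝ) : ℂ) := by
    rw [Matrix.trace]
    simp only [Matrix.diag]
    rw [Finset.sum_congr rfl fun k _ => hdiag k]
    push_cast
    try rfl
  rw [this, Complex.ofReal_re]
end main2


/-- Inequality (4.1): for fixed `0 < p < 1/2` there are constants `d_p, e_p > 0`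
such that whenever `e` is a projection with `τ_N(1-e) ≤ t` and `‖Y_n e‖_∞ ≤ 2μ`
for all `1 ≤ n ≤ N`, one has `N^p ≤ d_p μ^p N^{p/2} + e_p t^{1/2} N^p`. -/
theorem inter_inequality (p : ℝ) (hp0 : 0 < p) (hp : p < 1 / 2) :
    ∃ d ep : ℝ, 0 < d ∧ 0 < ep ∧
      ∀ N : ℕ, 1 ≤ N → ∀ t : ℝ, 0 < t → t < 1 → ∀ μ : ℝ, 0 < μ →
        ∀ e : Matrix (Fin N) (Fin N) ℂ, e.IsHermitian → e * e = e →
          (Matrix.trace (1 - e)).re / N ≤ t →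
          (∀ n : ℕ, 1 ≤ n → n ≤ N → opNorm (Ymat N n * e) ≤ 2 * μ) →
            (N : ℝ) ^ p ≤ d * μ ^ p * (N : ℝ) ^ (p / 2) + ep * t ^ (1 / 2 : ℝ) * (N : ℝ) ^ p := by
  have hp2 : 0 < p / 2 := by linarith
  have hp2' : p / 2 < 1 := by linarith
  have h6p : (0:ℝ) < (6:ℝ) ^ p := Real.rpow_pos_of_pos (by norm_num) p
  refine ⟨(6:ℝ) ^ p / (1 - p / 2), 1, div_pos h6p (by linarith), one_pos, ?_⟩
  intro N hN t ht0 ht1 μ hμ e he hee htr hY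
  set B : ℝ := (N : ℝ) with hB
  have hB0 : (0:ℝ) < B := by rw [hB]; exact_mod_cast Nat.lt_of_lt_of_le Nat.zero_lt_one hN
  -- trace lower bound
  have h1e : (Matrix.trace (1 - e)).re = B - (Matrix.trace e).re := by
    rw [Matrix.trace_sub, Matrix.trace_one]
    simp [Complex.sub_re, Fintype.card_fin]
    rfl
  have htrL : B * (1 - t) ≤ (Matrix.trace e).re := by
    rw [h1e, div_le_iff₀ hB0] at htr
    nlinarith
  -- trace as sum of squared column norms
  have htr2 : (Matrix.trace e).re
      = ∑ k : Fin N, ‖(WithLp.equiv 2 (Fin N → ℂ)).symm (e.mulVec (Pi.single k 1))‖ ^ 2 := by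
    rw [trace_re_eq e he hee]
    exact Finset.sum_congr rfl fun k _ => (col_norm_sq e k).symm
  -- pointwise: squared norm ≤ (6μ)^p * (k+1)^(-p/2)
  have hpt : ∀ k : Fin N,
      ‖(WithLp.equiv 2 (Fin N → ℂ)).symm (e.mulVec (Pi.single k 1))‖ ^ 2
        ≤ (6 * μ) ^ p * (((k:ℕ):ℝ) + 1) ^ (-(p/2)) := by
    intro k
    set x : ℝ := ‖(WithLp.equiv 2 (Fin N → ℂ)).symm (e.mulVec (Pi.single k 1))‖ with hx
    have hx0 : 0 ≤ x := norm_nonneg _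
    have hx1 : x ≤ 1 := col_norm_le_one e he hee k
    have hxb : x ≤ 6 * μ / Real.sqrt ((k:ℕ)+1) := by
      have := col_norm_le e he μ hμ hY k
      push_cast at this ⊢
      exact this
    have hkpos : (0:ℝ) < ((k:ℕ):ℝ) + 1 := by positivity
    have hsq : Real.sqrt (((k:ℕ):ℝ)+1) = (((k:ℕ):ℝ)+1) ^ (1/2 : ℝ) :=
      Real.sqrt_eq_rpow _
    have step1 : x ^ 2 ≤ x ^ p := by
      rcases eq_or_lt_of_le hx0 with h0 | h0
      · rw [← h0, Real.zero_rpow hp0.ne']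
        norm_num
      · have : x ^ (2:ℝ) ≤ x ^ p :=
          Real.rpow_le_rpow_of_exponent_ge h0 hx1 (by linarith)
        rwa [show (2:ℝ) = ((2:ℕ):ℝ) by norm_num, Real.rpow_natCast] at this
    have step2 : x ^ p ≤ (6 * μ / Real.sqrt (((k:ℕ):ℝ)+1)) ^ p := by
      apply Real.rpow_le_rpow hx0 _ hp0.le
      push_cast at hxb; exact hxb
    have step3 : (6 * μ / Real.sqrt (((k:ℕ):ℝ)+1)) ^ p
        = (6 * μ) ^ p * (((k:ℕ):ℝ) + 1) ^ (-(p/2)) := by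
      rw [Real.div_rpow (by positivity) (Real.sqrt_nonneg _), hsq,
        ← Real.rpow_mul hkpos.le, div_eq_mul_inv, ← Real.rpow_neg hkpos.le]
      congr 2
      ring
    calc x ^ 2 ≤ x ^ p := step1
      _ ≤ (6 * μ / Real.sqrt (((k:ℕ):ℝ)+1)) ^ p := step2
      _ = (6 * μ) ^ p * (((k:ℕ):ℝ) + 1) ^ (-(p/2)) := step3
  -- summing
  have hsum : B * (1 - t) ≤ (6 * μ) ^ p * (B ^ (1 - p/2) / (1 - p/2)) := by
    have h1 : B * (1 - t) ≤ ∑ k : Fin N, (6 * μ) ^ p * (((k:ℕ):ℝ) + 1) ^ (-(p/2)) := by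
      calc B * (1 - t) ≤ (Matrix.trace e).re := htrL
        _ = _ := htr2
        _ ≤ _ := Finset.sum_le_sum fun k _ => hpt k
    have h2 : ∑ k : Fin N, (6 * μ) ^ p * (((k:ℕ):ℝ) + 1) ^ (-(p/2))
        = (6 * μ) ^ p * ∑ k ∈ Finset.range N, ((k:ℝ) + 1) ^ (-(p/2)) := by
      rw [← Finset.mul_sum]
      congr 1
      exact Fin.sum_univ_eq_sum_range (fun k => ((k:ℝ) + 1) ^ (-(p/2))) N
    have h3 : ∑ k ∈ Finset.range N, ((k:ℝ) + 1) ^ (-(p/2)) ≤ B ^ (1 - p/2) / (1 - p/2) := by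
      rw [le_div_iff₀ (by linarith : (0:ℝ) < 1 - p/2), mul_comm]
      exact sum_rpow_aux hp2 hp2' N
    calc B * (1 - t) ≤ (6 * μ) ^ p * ∑ k ∈ Finset.range N, ((k:ℝ) + 1) ^ (-(p/2)) := by
          rw [← h2]; exact h1
      _ ≤ (6 * μ) ^ p * (B ^ (1 - p/2) / (1 - p/2)) := by
          apply mul_le_mul_of_nonneg_left h3 (Real.rpow_nonneg (by positivity) p)
  -- multiply by B^(p-1)
  have hkey : (1 - t) * B ^ p ≤ ((6:ℝ) ^ p / (1 - p/2)) * μ ^ p * B ^ (p/2) := by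
    have hBp1 : (0:ℝ) ≤ B ^ (p - 1) := Real.rpow_nonneg hB0.le _
    have h4 := mul_le_mul_of_nonneg_right hsum hBp1
    have e1 : B * (1 - t) * B ^ (p - 1) = (1 - t) * B ^ p := by
      rw [mul_comm B (1 - t), mul_assoc, ← Real.rpow_one_add' hB0.le (by intro h; nlinarith)]
      ring_nf
    have e2 : (6 * μ) ^ p * (B ^ (1 - p/2) / (1 - p/2)) * B ^ (p - 1)
        = ((6:ℝ) ^ p / (1 - p/2)) * μ ^ p * B ^ (p/2) := by
      rw [Real.mul_rpow (by norm_num) hμ.le]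
      rw [show (6:ℝ)^p * μ^p * (B ^ (1 - p/2) / (1 - p/2)) * B ^ (p - 1)
          = ((6:ℝ)^p / (1 - p/2)) * μ^p * (B ^ (1 - p/2) * B ^ (p - 1)) by ring]
      rw [← Real.rpow_add hB0]
      congr 2
      ring
    rw [e1, e2] at h4
    exact h4
  -- conclude
  have h5 : t * B ^ p ≤ t ^ (1/2 : ℝ) * B ^ p := by
    apply mul_le_mul_of_nonneg_right _ (Real.rpow_nonneg hB0.le p)
    calc t = t ^ (1:ℝ) := (Real.rpow_one t).symm
      _ ≤ t ^ (1/2 : ℝ) := Real.rpow_le_rpow_of_exponent_ge ht0 ht1.le (by norm_num)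
  have hBpnn : (0:ℝ) ≤ B ^ p := Real.rpow_nonneg hB0.le p
  have : B ^ p = (1 - t) * B ^ p + t * B ^ p := by ring
  rw [hB] at *
  linarith [hkey, h5]
end
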